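/- arXiv:1509.05862 — 4 statements merged into one kernel-verified Lean document; each statement's English description precedes it below -/
import Mathlib

section
/- Let α be a smooth action of ℝ on a smooth manifold M, W the interior of its fixed-point set Fix(α), and Per(α) its set of stably periodic points. Then the boundary of W contains no stably periodic point; equivalently, closure(W) ∩ Per(α) ⊆ W. -/
open Set Filter Function Topology Metric

open scoped Manifold

section Core

lemma loop_eq_const {E : Type*} [NormedAddCommGroup E] [NormedSpace ℝ E]
    {u : ℝ → E} {X : E → E} {p η : ℝ} (hp : 0 < p)
    (hu : ∀ t, HasDerivAt u (X (u t)) t)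
    (hper : Function.Periodic u p)
    (hlip : ∀ s t : ℝ, ‖X (u s) - X (u t)‖ ≤ η * ‖u s - u t‖)
    (hη : 0 ≤ η) (hsmall : η * p < 2) :
    ∀ t, u t = u 0 := by
  have hudiff : Differentiable ℝ u := fun t => (hu t).differentiableAt
  have hucont : Continuous u := hudiff.continuous
  -- continuity of X ∘ u
  have hXu : Continuous fun t => X (u t) := by
    rw [continuous_iff_continuousAt]
    intro t
    rw [ContinuousAt, tendsto_iff_norm_sub_tendsto_zero]
    refine squeeze_zero (fun s => norm_nonneg _) (fun s => hlip s t) ?_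
    have : Tendsto (fun s => u s - u t) (𝓝 t) (𝓝 (u t - u t)) :=
      (hucont.tendsto t).sub tendsto_const_nhds
    simpa using (this.norm.const_mul η)
  have hperX : Function.Periodic (fun t => X (u t)) p := hper.comp X
  obtain ⟨s₀, hs₀mem, hs₀max⟩ :=
    isCompact_Icc.exists_isMaxOn (nonempty_Icc.2 hp.le) (hXu.norm.continuousOn (s := Icc 0 p))
  set M₀ := ‖X (u s₀)‖ with hM₀def
  have hM₀ : 0 ≤ M₀ := norm_nonneg _
  -- global bound on the derivative
  have hbound : ∀ t : ℝ, ‖X (u t)‖ ≤ M₀ := by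
    intro t
    have h1 : (0:ℝ) ≤ t - ⌊t / p⌋ * p := Int.sub_floor_div_mul_nonneg t hp
    have h2 : t - ⌊t / p⌋ * p < p := Int.sub_floor_div_mul_lt t hp
    have := hperX.sub_int_mul_eq (x := t) ⌊t / p⌋
    rw [← this]
    exact hs₀max ⟨h1, h2.le⟩
  -- Lipschitz bound for u
  have hL : ∀ a b : ℝ, ‖u b - u a‖ ≤ M₀ * ‖b - a‖ := by
    intro a b
    exact convex_univ.norm_image_sub_le_of_norm_hasDerivWithin_le
      (fun t _ => (hu t).hasDerivWithinAt) (fun t _ => hbound t) (mem_univ a) (mem_univ b)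
  -- wrap-around bound
  have hwrap : ∀ t ∈ Icc (0:ℝ) p, ‖u t - u s₀‖ ≤ M₀ * (p / 2) := by
    intro t ht
    rcases le_or_gt |t - s₀| (p / 2) with h | h
    · calc ‖u t - u s₀‖ ≤ M₀ * ‖t - s₀‖ := hL s₀ t
        _ ≤ M₀ * (p / 2) := by
          apply mul_le_mul_of_nonneg_left _ hM₀
          simpa [Real.norm_eq_abs] using h
    · rcases le_total s₀ t with hst | hst
      · have : u s₀ = u (s₀ + p) := (hper s₀).symm
        rw [this]
        calc ‖u t - u (s₀ + p)‖ ≤ M₀ * ‖t - (s₀ + p)‖ := hL _ t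
          _ ≤ M₀ * (p / 2) := by
            apply mul_le_mul_of_nonneg_left _ hM₀
            rw [Real.norm_eq_abs, abs_sub_comm, abs_of_nonneg (by linarith [ht.2, hs₀mem.1])]
            have : t - s₀ > p / 2 := by
              rw [abs_of_nonneg (by linarith)] at h; linarith
            linarith
      · have : u t = u (t + p) := (hper t).symm
        rw [this]
        calc ‖u (t + p) - u s₀‖ ≤ M₀ * ‖t + p - s₀‖ := hL _ _
          _ ≤ M₀ * (p / 2) := by
            apply mul_le_mul_of_nonneg_left _ hM₀
            rw [Real.norm_eq_abs, abs_of_nonneg (by linarith [hs₀mem.2, ht.1])]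
            have : s₀ - t > p / 2 := by
              rw [abs_of_nonpos (by linarith), neg_sub] at h; linarith
            linarith [hs₀mem.2]
  -- the comparison function
  have hv : ∀ t : ℝ, HasDerivAt (fun t => u t - t • X (u s₀)) (X (u t) - X (u s₀)) t :=
    fun t => ((hu t).sub ((hasDerivAt_id' t).smul_const (X (u s₀)))).congr_deriv (by simp)
  have hmv : ‖(u p - p • X (u s₀)) - (u 0 - (0:ℝ) • X (u s₀))‖
      ≤ η * (M₀ * (p / 2)) * ‖p - 0‖ := by
    refine (convex_Icc (0:ℝ) p).norm_image_sub_le_of_norm_hasDerivWithin_le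
      (fun t _ => (hv t).hasDerivWithinAt) (fun t ht => ?_)
      (left_mem_Icc.2 hp.le) (right_mem_Icc.2 hp.le)
    calc ‖X (u t) - X (u s₀)‖ ≤ η * ‖u t - u s₀‖ := hlip t s₀
      _ ≤ η * (M₀ * (p / 2)) := mul_le_mul_of_nonneg_left (hwrap t ht) hη
  have hup : u p = u 0 := by simpa using hper 0
  have hM₀0 : M₀ = 0 := by
    rw [hup] at hmv
    simp only [zero_smul, sub_zero, sub_sub_cancel_left, norm_neg, norm_smul,
      Real.norm_eq_abs, abs_of_nonneg hp.le] at hmv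
    by_contra hne
    have hpos : 0 < M₀ := lt_of_le_of_ne hM₀ (Ne.symm hne)
    nlinarith [mul_lt_mul_of_pos_right hsmall (mul_pos hpos hp)]
  have hX0 : ∀ t : ℝ, X (u t) = 0 := fun t =>
    norm_le_zero_iff.1 (hM₀0 ▸ hbound t)
  intro t
  exact is_const_of_deriv_eq_zero hudiff
    (fun s => by rw [(hu s).deriv, hX0 s]) t 0

end Core

/-- Let `α` be a smooth action of `ℝ` on a smooth manifold `M`, `W` the interior of its
fixed-point set and `Per(α)` its set of stably periodic points.  Then the closure of `W`
meets `Per(α)` only inside `W`; equivalently, the boundary of `W` contains no stably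
periodic point. -/
theorem closure_interior_fixed_inter_stablyPeriodic_subset
    {E : Type*} [NormedAddCommGroup E] [NormedSpace ℝ E] [FiniteDimensional ℝ E]
    {H : Type*} [TopologicalSpace H] {I : ModelWithCorners ℝ E H} [I.Boundaryless]
    {M : Type*} [TopologicalSpace M] [ChartedSpace H M] [IsManifold I (⊤ : ℕ∞) M]
    [T2Space M] [SecondCountableTopology M]
    (α : ℝ → M → M)
    (hα : ContMDiff (𝓘(ℝ, ℝ).prod I) I (⊤ : ℕ∞) fun p : ℝ × M ↦ α p.1 p.2)
    (hα0 : ∀ x, α 0 x = x)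
    (hαadd : ∀ s t x, α (s + t) x = α s (α t x)) :
    closure (interior {x | ∀ t, α t x = x}) ∩
        {x | ∃ U : Set M, IsOpen U ∧ x ∈ U ∧ ∃ f : M → ℝ,
          ContMDiffOn I 𝓘(ℝ, ℝ) (⊤ : ℕ∞) f U ∧ (∀ y ∈ U, f y ≠ 0) ∧ ∀ y ∈ U, α (f y) y = y} ⊆
      interior {x | ∀ t, α t x = x} := by
  intro x hx
  obtain ⟨hxW, U, hUopen, hxU, f, hf, hfne, hfper⟩ := hx
  set Fix : Set M := {x | ∀ t, α t x = x} with hFixdef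
  have hcont : Continuous fun p : ℝ × M => α p.1 p.2 := hα.continuous
  have hαt : ∀ t : ℝ, Continuous (α t) := fun t =>
    hcont.comp (continuous_const.prodMk continuous_id)
  have hFixClosed : IsClosed Fix := by
    have : Fix = ⋂ t : ℝ, {y : M | α t y = y} := by
      ext y; simp [hFixdef]
    rw [this]
    exact isClosed_iInter fun t => isClosed_eq (hαt t) continuous_id
  have hxFix : ∀ t, α t x = x :=
    (closure_minimal interior_subset hFixClosed) hxW
  -- chart setup
  set e := extChartAt I x with hedef
  have hSopen : IsOpen e.source := isOpen_extChartAt_source x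
  have hxS : x ∈ e.source := mem_extChartAt_source x
  have hVopen : IsOpen e.target := isOpen_extChartAt_target x
  have hesymm : ∀ z ∈ e.target, e.symm z ∈ e.source := fun z hz => e.map_target hz
  have hxV : e x ∈ e.target := e.map_source hxS
  -- the flow written in the chart
  set F : ℝ × E → E := fun q => e (α q.1 (e.symm q.2)) with hFdef
  set G : Set (ℝ × E) :=
    (univ ×ˢ e.target) ∩ (fun q : ℝ × E => α q.1 (e.symm q.2)) ⁻¹' e.source with hGdef
  have hGmem : ∀ q : ℝ × E, q ∈ G ↔ q.2 ∈ e.target ∧ α q.1 (e.symm q.2) ∈ e.source := by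
    intro q
    simp [hGdef, Set.mem_prod]
  have hcsymm : ContinuousOn (fun q : ℝ × E => α q.1 (e.symm q.2)) (univ ×ˢ e.target) := by
    have hg : ContinuousOn (fun q : ℝ × E => ((q.1, e.symm q.2) : ℝ × M))
        (univ ×ˢ e.target) :=
      continuousOn_fst.prodMk ((continuousOn_extChartAt_symm x).comp continuousOn_snd
        fun q hq => hq.2)
    exact hcont.comp_continuousOn hg
  have hGopen : IsOpen G :=
    hcsymm.isOpen_inter_preimage (isOpen_univ.prod hVopen) hSopen
  have hG0 : ∀ z ∈ e.target, ((0 : ℝ), z) ∈ G := by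
    intro z hz
    rw [hGmem]
    exact ⟨hz, by rw [hα0]; exact hesymm z hz⟩
  -- smoothness of F on G
  have hFC : ContDiffOn ℝ ((⊤ : ℕ∞) : WithTop ℕ∞) F G := by
    have hg : ContMDiffOn (𝓘(ℝ, ℝ).prod 𝓘(ℝ, E)) (𝓘(ℝ, ℝ).prod I) (⊤ : ℕ∞)
        (fun q : ℝ × E => (q.1, e.symm q.2)) G := by
      refine ContMDiffOn.prodMk contMDiffOn_fst ?_
      exact (contMDiffOn_extChartAt_symm x).comp contMDiffOn_snd
        (fun q hq => ((hGmem q).1 hq).1)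
    have hc : ContMDiffOn (𝓘(ℝ, ℝ).prod 𝓘(ℝ, E)) I (⊤ : ℕ∞)
        (fun q : ℝ × E => α q.1 (e.symm q.2)) G := hα.comp_contMDiffOn hg
    have hF : ContMDiffOn (𝓘(ℝ, ℝ).prod 𝓘(ℝ, E)) 𝓘(ℝ, E) (⊤ : ℕ∞) F G := by
      have he : ContMDiffOn I 𝓘(ℝ, E) (⊤ : ℕ∞) e (chartAt H x).source := contMDiffOn_extChartAt
      refine he.comp hc ?_
      intro q hq
      rw [← extChartAt_source I]
      exact (hGmem q).1 hq |>.2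
    have hiff := contMDiffOn_iff_contDiffOn (f := F) (s := G) (n := (⊤ : ℕ∞))
      (𝕜 := ℝ) (E := ℝ × E) (E' := E)
    rw [modelWithCornersSelf_prod, ← chartedSpaceSelf_prod] at hiff
    exact_mod_cast hiff.1 hF
  -- the vector field in the chart
  set X : E → E := fun z => fderiv ℝ F ((0 : ℝ), z) ((1 : ℝ), (0 : E)) with hXdef
  have hFdiff : ∀ q ∈ G, HasFDerivAt F (fderiv ℝ F q) q := by
    intro q hq
    exact ((hFC.differentiableOn (by simp)).differentiableAt
      (hGopen.mem_nhds hq)).hasFDerivAt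
  have hXderiv : ∀ z ∈ e.target, HasDerivAt (fun s => F (s, z)) (X z) 0 := by
    intro z hz
    have h1 : HasDerivAt (fun s : ℝ => ((s, z) : ℝ × E)) ((1 : ℝ), (0 : E)) 0 :=
      (hasDerivAt_id 0).prodMk (hasDerivAt_const 0 z)
    exact (hFdiff _ (hG0 z hz)).comp_hasDerivAt 0 h1
  have hXC1 : ContDiffOn ℝ 1 X e.target := by
    have hDF : ContDiffOn ℝ 1 (fun q => fderiv ℝ F q) G :=
      hFC.fderiv_of_isOpen hGopen (WithTop.coe_le_coe.2 le_top)
    have hins : ContDiff ℝ 1 (fun z : E => ((0 : ℝ), z)) := contDiff_const.prodMk contDiff_id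
    have hcomp : ContDiffOn ℝ 1 (fun z : E => fderiv ℝ F ((0 : ℝ), z)) e.target :=
      hDF.comp hins.contDiffOn (fun z hz => hG0 z hz)
    exact (ContinuousLinearMap.apply ℝ E ((1 : ℝ), (0 : E))).contDiff.comp_contDiffOn hcomp
  have hXdiffOn : DifferentiableOn ℝ X e.target :=
    hXC1.differentiableOn one_ne_zero
  have hDXcont : ContinuousOn (fun z => fderiv ℝ X z) e.target :=
    hXC1.continuousOn_fderiv_of_isOpen hVopen le_rfl
  -- X vanishes at charts of fixed points
  have hXfix : ∀ y ∈ e.source, (∀ t, α t y = y) → X (e y) = 0 := by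
    intro y hy hyfix
    have hz : e y ∈ e.target := e.map_source hy
    have hconst : (fun s : ℝ => F (s, e y)) = fun _ => e y := by
      funext s
      simp only [hFdef]
      rw [e.left_inv hy, hyfix s]
    have h0 : HasDerivAt (fun s : ℝ => F (s, e y)) 0 0 := by
      rw [hconst]; exact hasDerivAt_const 0 (e y)
    exact (hXderiv (e y) hz).unique h0
  -- the open set of interior fixed points in the chart
  set W' : Set E := e.target ∩ e.symm ⁻¹' (interior Fix) with hW'def
  have hW'open : IsOpen W' :=
    (continuousOn_extChartAt_symm x).isOpen_inter_preimage hVopen isOpen_interior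
  have hXW' : ∀ z ∈ W', X z = 0 := by
    intro z hz
    have hy : e.symm z ∈ e.source := hesymm z hz.1
    have := hXfix (e.symm z) hy (fun t => interior_subset hz.2 t)
    rwa [e.right_inv hz.1] at this
  have hDXW' : ∀ z ∈ W', fderiv ℝ X z = 0 := by
    intro z hz
    have hev : X =ᶠ[𝓝 z] fun _ => 0 :=
      Filter.eventually_of_mem (hW'open.mem_nhds hz) hXW'
    rw [hev.fderiv_eq]
    exact fderiv_const_apply 0
  -- the chart image of x lies in the closure of W'
  have hxcl : e x ∈ closure W' := by
    have h1 : x ∈ closure (e.source ∩ interior Fix) :=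
      hSopen.inter_closure ⟨hxS, hxW⟩
    have h2 : ContinuousWithinAt e (e.source ∩ interior Fix) x :=
      ((continuousOn_extChartAt x).continuousAt (hSopen.mem_nhds hxS)).continuousWithinAt
    have h3 := h2.mem_closure_image h1
    refine closure_mono ?_ h3
    rintro z ⟨y, ⟨hyS, hyW⟩, rfl⟩
    refine ⟨e.map_source hyS, ?_⟩
    show e.symm (e y) ∈ interior Fix
    rw [e.left_inv hyS]; exact hyW
  have hDXx0 : fderiv ℝ X (e x) = 0 := by
    have h1 : Tendsto (fun z => fderiv ℝ X z) (𝓝[W'] (e x)) (𝓝 (fderiv ℝ X (e x))) :=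
      ((hDXcont.continuousAt (hVopen.mem_nhds hxV)).tendsto).mono_left nhdsWithin_le_nhds
    have h2 : Tendsto (fun z => fderiv ℝ X z) (𝓝[W'] (e x)) (𝓝 0) := by
      refine Tendsto.congr' ?_ tendsto_const_nhds
      filter_upwards [self_mem_nhdsWithin] with z hz
      exact (hDXW' z hz).symm
    have hne : (𝓝[W'] (e x)).NeBot := mem_closure_iff_nhdsWithin_neBot.1 hxcl
    exact tendsto_nhds_unique h1 h2
  -- choice of constants
  set T : ℝ := |f x| + 1 with hTdef
  have hTpos : (0 : ℝ) < T := by positivity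
  set η : ℝ := T⁻¹ with hηdef
  have hηpos : (0 : ℝ) < η := by positivity
  -- choose a small closed ball on which X is η-Lipschitz
  have hsmallnhd : ∀ᶠ z in 𝓝 (e x), ‖fderiv ℝ X z‖ < η := by
    have hgc : ContinuousAt (fun z => ‖fderiv ℝ X z‖) (e x) :=
      (hDXcont.continuousAt (hVopen.mem_nhds hxV)).norm
    have h0 : ‖fderiv ℝ X (e x)‖ < η := by rw [hDXx0]; simpa using hηpos
    exact hgc.eventually_lt continuousAt_const h0
  obtain ⟨ε, hεpos, hball⟩ := Metric.nhds_basis_closedBall.mem_iff.1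
    (inter_mem hsmallnhd (hVopen.mem_nhds hxV))
  have hcbV : closedBall (e x) ε ⊆ e.target := fun z hz => (hball hz).2
  have hXlip : ∀ z ∈ closedBall (e x) ε, ∀ w ∈ closedBall (e x) ε,
      ‖X w - X z‖ ≤ η * ‖w - z‖ := by
    intro z hz w hw
    exact (convex_closedBall (e x) ε).norm_image_sub_le_of_norm_fderiv_le
      (fun v hv => hXdiffOn.differentiableAt (hVopen.mem_nhds (hcbV hv)))
      (fun v hv => (hball hv).1.le) hz hw
  -- the good open neighborhood in M
  set Q : Set M := e.source ∩ e ⁻¹' (ball (e x) ε) with hQdef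
  have hQopen : IsOpen Q :=
    (continuousOn_extChartAt x).isOpen_inter_preimage hSopen isOpen_ball
  have hxQ : x ∈ Q := ⟨hxS, by simp [hεpos]⟩
  -- tube lemma
  have hsub : Icc (-T) T ×ˢ ({x} : Set M) ⊆ (fun p : ℝ × M => α p.1 p.2) ⁻¹' Q := by
    intro q hq
    have hy' : q.2 = x := hq.2
    show α q.1 q.2 ∈ Q
    rw [hy', hxFix q.1]
    exact hxQ
  obtain ⟨A, B, hAopen, hBopen, hIccA, hxB, hAB⟩ :=
    generalized_tube_lemma isCompact_Icc isCompact_singleton (hQopen.preimage hcont) hsub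
  have hABQ : ∀ t ∈ A, ∀ y ∈ B, α t y ∈ Q := fun t ht y hy => hAB (mk_mem_prod ht hy)
  -- boundedness of f near x
  have hfT : ∀ᶠ y in 𝓝 x, |f y| < T := by
    have hfx : ContinuousAt (fun y => |f y|) x :=
      ((hf.continuousOn.continuousAt (hUopen.mem_nhds hxU))).abs
    exact hfx.eventually_lt continuousAt_const (by rw [hTdef]; simp)
  have hNmem : (B ∩ U) ∩ {y | |f y| < T} ∈ 𝓝 x :=
    inter_mem (inter_mem (hBopen.mem_nhds (hxB rfl)) (hUopen.mem_nhds hxU)) hfT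
  rw [mem_interior_iff_mem_nhds]
  refine Filter.mem_of_superset hNmem ?_
  -- the main claim: every point of this neighborhood is fixed
  rintro y ⟨⟨hyB, hyU⟩, hyT⟩
  show ∀ t, α t y = y
  set p : ℝ := |f y| with hpdef
  have hppos : 0 < p := abs_pos.2 (hfne y hyU)
  have hpT : p < T := hyT
  have hαp : α p y = y := by
    rcases abs_cases (f y) with ⟨h1, _⟩ | ⟨h1, _⟩
    · rw [hpdef, h1]; exact hfper y hyU
    · rw [hpdef, h1]
      calc α (-f y) y = α (-f y) (α (f y) y) := by rw [hfper y hyU]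
        _ = α (-f y + f y) y := (hαadd _ _ _).symm
        _ = y := by rw [neg_add_cancel, hα0]
  have hper : Function.Periodic (fun t => α t y) p := by
    intro t
    show α (t + p) y = α t y
    rw [hαadd t p y, hαp]
  have horb : ∀ t : ℝ, α t y ∈ Q := by
    intro t
    have h1 : (0:ℝ) ≤ t - ⌊t / p⌋ * p := Int.sub_floor_div_mul_nonneg t hppos
    have h2 : t - ⌊t / p⌋ * p < p := Int.sub_floor_div_mul_lt t hppos
    have heq : α (t - ⌊t / p⌋ * p) y = α t y := hper.sub_int_mul_eq ⌊t / p⌋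
    rw [← heq]
    exact hABQ _ (hIccA ⟨by linarith, by linarith⟩) y hyB
  set u : ℝ → E := fun t => e (α t y) with hudef
  have hu_mem : ∀ t, α t y ∈ e.source := fun t => (horb t).1
  have hu_ball : ∀ t, u t ∈ closedBall (e x) ε := fun t =>
    ball_subset_closedBall (horb t).2
  have hu_per : Function.Periodic u p := fun t => congrArg e (hper t)
  have hu_deriv : ∀ t, HasDerivAt u (X (u t)) t := by
    intro t
    have hzV : u t ∈ e.target := hcbV (hu_ball t)
    have hkey : ∀ s : ℝ, u s = F (s - t, u t) := by
      intro s
      show e (α s y) = e (α (s - t) (e.symm (e (α t y))))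
      rw [e.left_inv (hu_mem t), ← hαadd (s - t) t y, sub_add_cancel]
    have houter : HasDerivAt (fun s => F (s, u t)) (X (u t)) 0 := hXderiv _ hzV
    have hinner : HasDerivAt (fun s : ℝ => s - t) 1 t := (hasDerivAt_id t).sub_const t
    have hcomp : HasDerivAt ((fun s => F (s, u t)) ∘ (fun s : ℝ => s - t))
        ((1 : ℝ) • X (u t)) t := by
      refine HasDerivAt.scomp t ?_ hinner
      simpa using houter
    have hfun : ((fun s => F (s, u t)) ∘ (fun s : ℝ => s - t)) = u :=
      funext fun s => (hkey s).symm
    rw [hfun] at hcomp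
    simpa using hcomp
  have hlip' : ∀ s t' : ℝ, ‖X (u s) - X (u t')‖ ≤ η * ‖u s - u t'‖ := fun s t' =>
    hXlip _ (hu_ball t') _ (hu_ball s)
  have hsmall : η * p < 2 := by
    have h1 : η * p < η * T := mul_lt_mul_of_pos_left hpT hηpos
    have h2 : η * T = 1 := inv_mul_cancel₀ (ne_of_gt hTpos)
    linarith
  have happ := loop_eq_const hppos hu_deriv hu_per hlip' hηpos.le hsmall
  intro t
  have hu0 : u 0 = e y := by
    show e (α 0 y) = e y
    rw [hα0]
  have hy0 : y ∈ e.source := by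
    have := hu_mem 0
    rwa [hα0] at this
  have := happ t
  rw [hu0] at this
  exact e.injOn (hu_mem t) hy0 this
end

section
/- Let α be a smooth action of ℝ on a smooth manifold M, W the interior of its fixed-point set Fix(α), and Per(α) its set of stably periodic points. Then the set Per(α) \ W of nontrivial stably periodic points is an open subset of M. -/
open scoped Manifold
open Set Metric Filter Topology

section helpers

variable {E' : Type*} [NormedAddCommGroup E'] [NormedSpace ℝ E']

/-- Quantitative core: a periodic solution of `c' = X c` staying in a ball where `X` is
`ε`-Lipschitz, with period `p` satisfying `ε * p ≤ 1/3`, starts at a zero of `X`. -/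
lemma core_zero (X : E' → E') (z₀ : E') (ε r p : ℝ) (hp : 0 < p)
    (hεp : ε * p ≤ 1 / 3) (hε : 0 ≤ ε)
    (hLip : ∀ w₁ ∈ closedBall z₀ r, ∀ w₂ ∈ closedBall z₀ r, ‖X w₁ - X w₂‖ ≤ ε * ‖w₁ - w₂‖)
    (c : ℝ → E')
    (hder : ∀ t ∈ Icc 0 p, HasDerivAt c (X (c t)) t)
    (hmem : ∀ t ∈ Icc 0 p, c t ∈ closedBall z₀ r)
    (hper : c p = c 0) : X (c 0) = 0 := by
  have h0p : (0:ℝ) ∈ Icc 0 p := ⟨le_refl 0, hp.le⟩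
  have hccont : ContinuousOn c (Icc 0 p) := fun t ht => (hder t ht).continuousAt.continuousWithinAt
  -- continuity of t ↦ X (c t)
  have hXLip : LipschitzOnWith ε.toNNReal X (closedBall z₀ r) := by
    apply LipschitzOnWith.of_dist_le_mul
    intro a ha b hb
    rw [Real.coe_toNNReal _ hε, dist_eq_norm, dist_eq_norm]
    exact hLip a ha b hb
  have hXc : ContinuousOn (fun t => ‖X (c t)‖) (Icc 0 p) :=
    ((hXLip.continuousOn.comp hccont hmem)).norm
  obtain ⟨t₀, ht₀, hmax⟩ := isCompact_Icc.exists_isMaxOn (⟨0, h0p⟩ : (Icc (0:ℝ) p).Nonempty) hXc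
  set M := ‖X (c t₀)‖ with hM
  have hMnn : 0 ≤ M := norm_nonneg _
  have hbound : ∀ t ∈ Icc 0 p, ‖X (c t)‖ ≤ M := fun t ht => hmax ht
  -- displacement bound
  have hdisp : ∀ t ∈ Icc 0 p, ‖c t - c 0‖ ≤ M * t := by
    intro t ht
    have := Convex.norm_image_sub_le_of_norm_hasDerivWithin_le
      (f := c) (f' := fun t => X (c t)) (s := Icc 0 p)
      (fun s hs => (hder s hs).hasDerivWithinAt) hbound (convex_Icc 0 p) h0p ht
    calc ‖c t - c 0‖ ≤ M * ‖t - 0‖ := this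
    _ = M * t := by rw [sub_zero, Real.norm_eq_abs, abs_of_nonneg ht.1]
  set a := ‖X (c 0)‖ with ha
  have hMa : M ≤ a + ε * p * M := by
    have h1 : ‖X (c t₀) - X (c 0)‖ ≤ ε * ‖c t₀ - c 0‖ := hLip _ (hmem _ ht₀) _ (hmem _ h0p)
    have h2 : ‖c t₀ - c 0‖ ≤ M * t₀ := hdisp _ ht₀
    calc M = ‖X (c 0) + (X (c t₀) - X (c 0))‖ := by rw [hM]; congr 1; abel
    _ ≤ a + ‖X (c t₀) - X (c 0)‖ := norm_add_le _ _
    _ ≤ a + ε * (M * t₀) := by nlinarith [mul_le_mul_of_nonneg_left h2 hε]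
    _ ≤ a + ε * p * M := by nlinarith [mul_le_mul_of_nonneg_right ht₀.2 (mul_nonneg hε hMnn)]
  have hM32 : M ≤ (3/2) * a := by nlinarith [mul_le_mul_of_nonneg_right hεp hMnn]
  -- second mean value inequality with h t = c t - t • X (c 0)
  have hder2 : ∀ t ∈ Icc 0 p,
      HasDerivWithinAt (fun t => c t - t • X (c 0)) (X (c t) - X (c 0)) (Icc 0 p) t := by
    intro t ht
    exact ((hder t ht).sub ((hasDerivAt_id t).smul_const (X (c 0)))).hasDerivWithinAt
      |>.congr_deriv (by simp)
  have hbd2 : ∀ t ∈ Icc 0 p, ‖X (c t) - X (c 0)‖ ≤ ε * (M * p) := by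
    intro t ht
    have h1 : ‖X (c t) - X (c 0)‖ ≤ ε * ‖c t - c 0‖ := hLip _ (hmem _ ht) _ (hmem _ h0p)
    have h2 : ‖c t - c 0‖ ≤ M * t := hdisp _ ht
    have h3 : ε * ‖c t - c 0‖ ≤ ε * (M * t) := mul_le_mul_of_nonneg_left h2 hε
    have h4 : M * t ≤ M * p := mul_le_mul_of_nonneg_left ht.2 hMnn
    nlinarith
  have hfin := Convex.norm_image_sub_le_of_norm_hasDerivWithin_le
      (f := fun t => c t - t • X (c 0)) (f' := fun t => X (c t) - X (c 0)) (s := Icc 0 p)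
      hder2 hbd2 (convex_Icc 0 p) h0p ⟨hp.le, le_refl p⟩
  have hfin' : ‖(c p - p • X (c 0)) - (c 0 - (0:ℝ) • X (c 0))‖ ≤ ε * (M * p) * ‖p - (0:ℝ)‖ := hfin
  have hkey : p * a ≤ ε * (M * p) * p := by
    calc p * a = ‖(c p - p • X (c 0)) - (c 0 - (0:ℝ) • X (c 0))‖ := by
          rw [hper]
          simp only [zero_smul, sub_zero]
          rw [show c 0 - p • X (c 0) - c 0 = -(p • X (c 0)) by abel, norm_neg, norm_smul,
            Real.norm_eq_abs, abs_of_nonneg hp.le, ha]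
    _ ≤ ε * (M * p) * ‖p - (0:ℝ)‖ := hfin'
    _ = ε * (M * p) * p := by rw [sub_zero, Real.norm_eq_abs, abs_of_nonneg hp.le]
  have hanonneg : 0 ≤ a := norm_nonneg _
  have h5 : ε * p * (M * p) ≤ 1/3 * (M * p) := mul_le_mul_of_nonneg_right hεp (mul_nonneg hMnn hp.le)
  have h6 : M * p ≤ 3/2 * a * p := mul_le_mul_of_nonneg_right hM32 hp.le
  have hale : a ≤ 0 := by nlinarith
  have : a = 0 := le_antisymm hale hanonneg
  rwa [ha, norm_eq_zero] at this

/-- Continuous-induction confinement lemma: a local solution of `c' = X c` with `‖X‖ ≤ ε r`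
on the `r`-ball, starting in the `r/4`-ball, stays in the `2r/3`-ball for time `p` with
`ε p ≤ 1/3`, provided the "re-entry" property `hlim` holds. -/
lemma confine (X : E' → E') (z₀ : E') (ε r p : ℝ) (hr : 0 < r) (hp : 0 ≤ p)
    (hεp : ε * p ≤ 1 / 3) (hε : 0 ≤ ε)
    (hX : ∀ w ∈ closedBall z₀ r, ‖X w‖ ≤ ε * r)
    (c : ℝ → E') (P : ℝ → Prop)
    (h0 : P 0) (hc0 : c 0 ∈ closedBall z₀ (r / 4))
    (hder : ∀ t, P t → HasDerivAt c (X (c t)) t)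
    (hPopen : IsOpen {t | P t})
    (hlim : ∀ t ∈ Ioc 0 p, (∀ s ∈ Ico 0 t, P s ∧ c s ∈ closedBall z₀ (2 / 3 * r)) →
        P t ∧ c t ∈ closedBall z₀ (2 / 3 * r)) :
    ∀ t ∈ Icc 0 p, P t ∧ c t ∈ closedBall z₀ (2 / 3 * r) := by
  set Q : ℝ → Prop := fun t => P t ∧ c t ∈ closedBall z₀ (2 / 3 * r) with hQdef
  have hQ0 : Q 0 := ⟨h0, closedBall_subset_closedBall (by linarith) hc0⟩
  set A : Set ℝ := {t | t ∈ Icc 0 p ∧ ∀ s ∈ Icc 0 t, Q s} with hAdef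
  have h0A : (0:ℝ) ∈ A := by
    refine ⟨⟨le_refl 0, hp⟩, fun s hs => ?_⟩
    have : s = 0 := le_antisymm hs.2 hs.1
    rwa [this]
  have hbdd : BddAbove A := ⟨p, fun t ht => ht.1.2⟩
  have hne : A.Nonempty := ⟨0, h0A⟩
  set T := sSup A with hTdef
  have hT0 : 0 ≤ T := le_csSup hbdd h0A
  have hTp : T ≤ p := csSup_le hne fun t ht => ht.1.2
  have step1 : ∀ s ∈ Ico 0 T, Q s := by
    intro s hs
    obtain ⟨t', ht'A, hst'⟩ := exists_lt_of_lt_csSup hne hs.2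
    exact ht'A.2 s ⟨hs.1, hst'.le⟩
  have step2 : Q T := by
    rcases eq_or_lt_of_le hT0 with h | h
    · rwa [← h]
    · exact hlim T ⟨h, hTp⟩ step1
  have step3 : T ∈ A := by
    refine ⟨⟨hT0, hTp⟩, fun s hs => ?_⟩
    rcases eq_or_lt_of_le hs.2 with h | h
    · rwa [h]
    · exact step1 s ⟨hs.1, h⟩
  have step4 : T = p := by
    by_contra hne'
    have hTltp : T < p := lt_of_le_of_ne hTp hne'
    -- c T is well inside the 2r/3 ball
    have hsub : closedBall z₀ (2 / 3 * r) ⊆ closedBall z₀ r :=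
      closedBall_subset_closedBall (by linarith)
    have hmean : ‖c T - c 0‖ ≤ ε * r * T := by
      have := Convex.norm_image_sub_le_of_norm_hasDerivWithin_le
        (f := c) (f' := fun t => X (c t)) (s := Icc 0 T) (C := ε * r)
        (fun s hs => (hder s (step3.2 s hs).1).hasDerivWithinAt)
        (fun s hs => hX _ (hsub (step3.2 s hs).2))
        (convex_Icc 0 T) ⟨le_refl 0, hT0⟩ ⟨hT0, le_refl T⟩
      calc ‖c T - c 0‖ ≤ ε * r * ‖T - 0‖ := this
      _ = ε * r * T := by rw [sub_zero, Real.norm_eq_abs, abs_of_nonneg hT0]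
    have hctin : c T ∈ ball z₀ (2 / 3 * r) := by
      have h1 : dist (c T) z₀ ≤ dist (c T) (c 0) + dist (c 0) z₀ := dist_triangle _ _ _
      have h2 : dist (c T) (c 0) ≤ ε * r * T := by rwa [dist_eq_norm]
      have h3 : dist (c 0) z₀ ≤ r / 4 := hc0
      have h4 : ε * r * T ≤ r / 3 := by nlinarith [mul_le_mul_of_nonneg_left hTp hε]
      have : dist (c T) z₀ ≤ 7 / 12 * r := by linarith
      rw [mem_ball]
      linarith
    have hev : ∀ᶠ s in 𝓝 T, Q s := by
      have e1 : ∀ᶠ s in 𝓝 T, P s := hPopen.mem_nhds step2.1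
      have e2 : ∀ᶠ s in 𝓝 T, c s ∈ ball z₀ (2 / 3 * r) :=
        (hder T step2.1).continuousAt (isOpen_ball.mem_nhds hctin)
      filter_upwards [e1, e2] with s h1 h2
      exact ⟨h1, ball_subset_closedBall h2⟩
    obtain ⟨δ, hδ0, hδ⟩ := Metric.eventually_nhds_iff.mp hev
    set δ' := min (δ / 2) (p - T) with hδ'def
    have hδ'0 : 0 < δ' := lt_min (by linarith) (by linarith)
    have hTA : T + δ' ∈ A := by
      refine ⟨⟨by linarith, by
        have := min_le_right (δ / 2) (p - T); linarith⟩, fun s hs => ?_⟩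
      rcases le_or_gt s T with h | h
      · exact step3.2 s ⟨hs.1, h⟩
      · apply hδ
        have h5 : s ≤ T + δ' := hs.2
        have h6 : δ' ≤ δ / 2 := min_le_left _ _
        rw [Real.dist_eq, abs_of_pos (by linarith)]
        linarith
    have := le_csSup hbdd hTA
    linarith
  intro t ht
  exact step3.2 t (step4 ▸ ht)



lemma fix_of_interval {M : Type*} (α : ℝ → M → M) (hα0 : ∀ x, α 0 x = x)
    (hαadd : ∀ s t x, α (s + t) x = α s (α t x)) (y : M) (η : ℝ) (hη : 0 < η)
    (h : ∀ s ∈ Icc (0:ℝ) η, α s y = y) : ∀ t, α t y = y := by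
  have hnat : ∀ n : ℕ, ∀ s ∈ Icc (0:ℝ) η, α (n * s) y = y := by
    intro n
    induction n with
    | zero => intro s _; simpa using hα0 y
    | succ n ih =>
      intro s hs
      have h1 : ((n:ℝ) + 1) * s = (n:ℝ) * s + s := by ring
      rw [Nat.cast_succ, h1, hαadd, h s hs]
      exact ih s hs
  have hpos : ∀ t : ℝ, 0 ≤ t → α t y = y := by
    intro t ht
    rcases eq_or_lt_of_le ht with h0 | h0
    · rw [← h0]; exact hα0 y
    obtain ⟨n, hn⟩ := exists_nat_gt (t / η)
    have hn0 : (0:ℝ) < n := lt_trans (div_pos h0 hη) hn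
    have hs : t / n ∈ Icc (0:ℝ) η := by
      constructor
      · exact div_nonneg ht hn0.le
      · rw [div_le_iff₀ hn0]
        have := (div_lt_iff₀ hη).mp hn
        linarith
    have h2 := hnat n (t / n) hs
    rwa [show (n:ℝ) * (t / n) = t from by field_simp] at h2
  intro t
  rcases le_or_gt 0 t with h0 | h0
  · exact hpos t h0
  · have h1 : α (-t) y = y := hpos (-t) (by linarith)
    calc α t y = α t (α (-t) y) := by rw [h1]
    _ = α (t + -t) y := (hαadd t (-t) y).symm
    _ = α 0 y := by rw [add_neg_cancel]
    _ = y := hα0 y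

end helpers

section key

variable {E : Type*} [NormedAddCommGroup E] [NormedSpace ℝ E] [FiniteDimensional ℝ E]
    {H : Type*} [TopologicalSpace H] {I : ModelWithCorners ℝ E H} [I.Boundaryless]
    {M : Type*} [TopologicalSpace M] [ChartedSpace H M] [IsManifold I (⊤ : ℕ∞) M]
    [T2Space M] [SecondCountableTopology M]

lemma key (α : ℝ → M → M)
    (hα : ContMDiff (𝓘(ℝ, ℝ).prod I) I (⊤ : ℕ∞) fun p : ℝ × M ↦ α p.1 p.2)
    (hα0 : ∀ x, α 0 x = x)
    (hαadd : ∀ s t x, α (s + t) x = α s (α t x))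
    {x : M} {U : Set M} (hU : IsOpen U) (hxU : x ∈ U)
    {f : M → ℝ} (hfc : ContinuousOn f U) (hf0 : ∀ y ∈ U, f y ≠ 0)
    (hfper : ∀ y ∈ U, α (f y) y = y)
    (hxcl : x ∈ closure (interior {y : M | ∀ t, α t y = y})) :
    x ∈ interior {y : M | ∀ t, α t y = y} := by
  have hcont : Continuous fun p : ℝ × M => α p.1 p.2 := hα.continuous
  have hcont1 : ∀ y : M, Continuous fun t => α t y := fun y =>
    hcont.comp (continuous_id.prodMk continuous_const)
  have hcont2 : ∀ t : ℝ, Continuous fun y => α t y := fun t =>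
    hcont.comp (continuous_const.prodMk continuous_id)
  have hFixclosed : IsClosed {y : M | ∀ t, α t y = y} := by
    have : {y : M | ∀ t, α t y = y} = ⋂ t : ℝ, {y | α t y = y} := by ext y; simp
    rw [this]
    exact isClosed_iInter fun t => isClosed_eq (hcont2 t) continuous_id
  have hxFix : ∀ t, α t x = x :=
    hFixclosed.closure_subset ((closure_mono interior_subset) hxcl)
  set e := extChartAt I x with he
  have hxe : x ∈ e.source := mem_extChartAt_source x
  set z₀ := e x with hz₀
  have hz₀t : z₀ ∈ e.target := e.map_source hxe
  have htopen : IsOpen e.target := isOpen_extChartAt_target x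
  have hsopen : IsOpen e.source := isOpen_extChartAt_source x
  have hsymm_cont : ContinuousOn e.symm e.target := continuousOn_extChartAt_symm x
  have he_cont : ContinuousOn e e.source := continuousOn_extChartAt x
  set G : ℝ × E → E := fun p => e (α p.1 (e.symm p.2)) with hG
  set O : Set (ℝ × E) := {p : ℝ × E | p.2 ∈ e.target ∧ α p.1 (e.symm p.2) ∈ e.source} with hO
  -- smoothness of G on O
  have hGsm : ContDiffOn ℝ (⊤ : ℕ∞) G O := by
    have h := (contMDiff_iff.mp hα).2 (0, x) x
    simp only [extChartAt_prod, extChartAt_model_space_eq_id] at h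
    have h2 : ((PartialEquiv.refl ℝ).prod (extChartAt I x)).symm =
        (PartialEquiv.refl ℝ).prod (extChartAt I x).symm := by simp [PartialEquiv.prod_symm]
    rw [h2] at h
    apply h.congr_mono
    · intro p hp
      rfl
    · intro p hp
      exact ⟨⟨trivial, hp.1⟩, hp.2⟩
  -- O is open
  have hFcontOn : ContinuousOn (fun p : ℝ × E => α p.1 (e.symm p.2)) (univ ×ˢ e.target) := by
    have hin : ContinuousOn (fun p : ℝ × E => ((p.1, e.symm p.2) : ℝ × M)) (univ ×ˢ e.target) :=
      continuous_fst.continuousOn.prodMk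
        (hsymm_cont.comp continuous_snd.continuousOn (fun p hp => hp.2))
    exact hcont.comp_continuousOn hin
  have hOopen : IsOpen O := by
    have h1 : IsOpen ((univ ×ˢ e.target) ∩
        (fun p : ℝ × E => α p.1 (e.symm p.2)) ⁻¹' e.source) :=
      hFcontOn.isOpen_inter_preimage (isOpen_univ.prod htopen) hsopen
    convert h1 using 1
    ext p
    simp [hO]
  have hGdiff : ∀ p ∈ O, DifferentiableAt ℝ G p := by
    intro p hp
    have h1 : DifferentiableOn ℝ G O := hGsm.differentiableOn (by simp)
    exact (h1 p hp).differentiableAt (hOopen.mem_nhds hp)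
  set X : E → E := fun w => fderiv ℝ G (0, w) (1, 0) with hX
  have hO0 : ∀ w ∈ e.target, ((0:ℝ), w) ∈ O := by
    intro w hw
    refine ⟨hw, ?_⟩
    rw [hα0]
    exact e.map_target hw
  have hGd : ∀ w ∈ e.target, HasDerivAt (fun s => G (s, w)) (X w) 0 := by
    intro w hw
    have hd := (hGdiff _ (hO0 w hw)).hasFDerivAt
    have h1 : HasDerivAt (fun s : ℝ => ((s, w) : ℝ × E)) ((1:ℝ), (0:E)) 0 :=
      (hasDerivAt_id 0).prodMk (hasDerivAt_const 0 w)
    exact hd.comp_hasDerivAt 0 h1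
  have hXsm : ContDiffOn ℝ (⊤ : ℕ∞) X e.target := by
    have h1 : ContDiffOn ℝ (⊤ : ℕ∞) (fun p => fderiv ℝ G p) O :=
      hGsm.fderiv_of_isOpen hOopen (by simp)
    have h2 : ContDiff ℝ (⊤ : ℕ∞) (fun w : E => ((0:ℝ), w)) := contDiff_const.prodMk contDiff_id
    have h3 : ContDiffOn ℝ (⊤ : ℕ∞) (fun w : E => fderiv ℝ G (0, w)) e.target :=
      h1.comp h2.contDiffOn (fun w hw => hO0 w hw)
    exact (ContinuousLinearMap.apply ℝ E ((1:ℝ), (0:E))).contDiff.comp_contDiffOn h3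
  have hX0 : X z₀ = 0 := by
    have hconst : (fun s : ℝ => G (s, z₀)) = fun _ => z₀ := by
      funext s
      show e (α s (e.symm (e x))) = e x
      rw [e.left_inv hxe, hxFix s]
    have h := hGd z₀ hz₀t
    rw [hconst] at h
    exact ((hasDerivAt_const (0:ℝ) z₀).unique h).symm
  -- the flow derivative
  have hcder : ∀ (y : M) (t₀ : ℝ), α t₀ y ∈ e.source →
      HasDerivAt (fun t => e (α t y)) (X (e (α t₀ y))) t₀ := by
    intro y t₀ hmem
    set w₀ := e (α t₀ y) with hw₀def
    have hw₀ : w₀ ∈ e.target := e.map_source hmem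
    have heq : (fun t => e (α t y)) = (fun s => G (s, w₀)) ∘ (fun t => t - t₀) := by
      funext t
      show e (α t y) = e (α (t - t₀) (e.symm (e (α t₀ y))))
      rw [e.left_inv hmem, ← hαadd]
      norm_num
    rw [heq]
    have h1 : HasDerivAt (fun t : ℝ => t - t₀) 1 t₀ := (hasDerivAt_id t₀).sub_const t₀
    have h2 : HasDerivAt (fun s => G (s, w₀)) (X w₀) 0 := hGd w₀ hw₀
    have := HasDerivAt.scomp_of_eq t₀ h2 h1 (by rw [sub_self])
    simpa using this
  -- X vanishes on the chart image of the interior of the fixed-point set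
  set W := interior {y : M | ∀ t, α t y = y} with hW
  set Ω : Set E := e.target ∩ e.symm ⁻¹' W with hΩdef
  have hΩopen : IsOpen Ω := hsymm_cont.isOpen_inter_preimage htopen isOpen_interior
  have hXΩ : ∀ w ∈ Ω, X w = 0 := by
    intro w hw
    have hfix : ∀ t, α t (e.symm w) = e.symm w := interior_subset hw.2
    have hconst : (fun s : ℝ => G (s, w)) = fun _ => w := by
      funext s
      show e (α s (e.symm w)) = w
      rw [hfix s, e.right_inv hw.1]
    have h := hGd w hw.1
    rw [hconst] at h
    exact ((hasDerivAt_const (0:ℝ) w).unique h).symm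
  have hz₀cl : z₀ ∈ closure Ω := by
    have h1 : x ∈ closure (e.source ∩ W) := hsopen.inter_closure ⟨hxe, hxcl⟩
    have h2 : ContinuousWithinAt e (e.source ∩ W) x :=
      (he_cont x hxe).mono inter_subset_left
    have h3 : z₀ ∈ closure (e '' (e.source ∩ W)) := h2.mem_closure_image h1
    refine closure_mono ?_ h3
    rintro w ⟨y, ⟨hy1, hy2⟩, rfl⟩
    exact ⟨e.map_source hy1, by rw [mem_preimage, e.left_inv hy1]; exact hy2⟩
  have hFc : ContinuousOn (fderiv ℝ X) e.target :=
    hXsm.continuousOn_fderiv_of_isOpen htopen (by simp)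
  have hFz₀ : fderiv ℝ X z₀ = 0 := by
    have hF0 : ∀ w ∈ Ω, fderiv ℝ X w = 0 := by
      intro w hw
      have hev : X =ᶠ[𝓝 w] fun _ => 0 :=
        eventually_of_mem (hΩopen.mem_nhds hw) (fun w' hw' => hXΩ w' hw')
      rw [hev.fderiv_eq, fderiv_fun_const]
      rfl
    have hne : (𝓝[Ω] z₀).NeBot := mem_closure_iff_nhdsWithin_neBot.mp hz₀cl
    have h1 : Tendsto (fderiv ℝ X) (𝓝[Ω] z₀) (𝓝 (fderiv ℝ X z₀)) :=
      ((hFc.continuousAt (htopen.mem_nhds hz₀t)).tendsto).mono_left nhdsWithin_le_nhds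
    have h2 : Tendsto (fderiv ℝ X) (𝓝[Ω] z₀) (𝓝 0) := by
      apply Tendsto.congr' _ tendsto_const_nhds
      exact eventually_nhdsWithin_of_forall (fun w hw => (hF0 w hw).symm)
    exact tendsto_nhds_unique h1 h2
  -- choose the radius
  set T := |f x| with hT
  have hTpos : 0 < T := abs_pos.mpr (hf0 x hxU)
  set ε : ℝ := 1 / (6 * T) with hε
  have hεpos : 0 < ε := by positivity
  have hevent : ∀ᶠ w in 𝓝 z₀, ‖fderiv ℝ X w‖ ≤ ε ∧ w ∈ e.target := by
    have h1 : Tendsto (fun w => ‖fderiv ℝ X w‖) (𝓝 z₀) (𝓝 0) := by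
      have := ((hFc.continuousAt (htopen.mem_nhds hz₀t)).tendsto).norm
      rwa [hFz₀, norm_zero] at this
    have h2 : ∀ᶠ w in 𝓝 z₀, ‖fderiv ℝ X w‖ < ε := h1 (Iio_mem_nhds hεpos)
    filter_upwards [h2, htopen.mem_nhds hz₀t] with w hw1 hw2
    exact ⟨hw1.le, hw2⟩
  obtain ⟨r, hr0, hball⟩ := Metric.nhds_basis_closedBall.eventually_iff.mp hevent
  have hballt : closedBall z₀ r ⊆ e.target := fun w hw => (hball hw).2
  have hXdiff : ∀ w ∈ closedBall z₀ r, HasFDerivWithinAt X (fderiv ℝ X w) (closedBall z₀ r) w := by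
    intro w hw
    have h1 : DifferentiableOn ℝ X e.target := hXsm.differentiableOn (by simp)
    exact ((h1 w (hballt hw)).differentiableAt
      (htopen.mem_nhds (hballt hw))).hasFDerivAt.hasFDerivWithinAt
  have hLip : ∀ w₁ ∈ closedBall z₀ r, ∀ w₂ ∈ closedBall z₀ r,
      ‖X w₁ - X w₂‖ ≤ ε * ‖w₁ - w₂‖ := by
    intro w₁ hw₁ w₂ hw₂
    exact Convex.norm_image_sub_le_of_norm_hasFDerivWithin_le hXdiff
      (fun w hw => (hball hw).1) (convex_closedBall z₀ r) hw₂ hw₁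
  have hz₀ball : z₀ ∈ closedBall z₀ r := mem_closedBall_self hr0.le
  have hXb : ∀ w ∈ closedBall z₀ r, ‖X w‖ ≤ ε * r := by
    intro w hw
    have h1 : ‖X w - X z₀‖ ≤ ε * ‖w - z₀‖ := hLip w hw z₀ hz₀ball
    rw [hX0, sub_zero] at h1
    calc ‖X w‖ ≤ ε * ‖w - z₀‖ := h1
    _ ≤ ε * r := by
        apply mul_le_mul_of_nonneg_left _ hεpos.le
        rw [← dist_eq_norm]
        exact hw
  -- the good neighborhood of x
  set V : Set M := (U ∩ f ⁻¹' Ioo (-(2 * T)) (2 * T)) ∩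
      (e.source ∩ e ⁻¹' ball z₀ (r / 4)) with hV
  have hVopen : IsOpen V :=
    (hfc.isOpen_inter_preimage hU isOpen_Ioo).inter
      (he_cont.isOpen_inter_preimage hsopen isOpen_ball)
  have hxV : x ∈ V := by
    refine ⟨⟨hxU, ?_⟩, hxe, ?_⟩
    · have := abs_lt.mp (show |f x| < 2 * T by rw [← hT]; linarith)
      exact ⟨this.1, this.2⟩
    · show e x ∈ ball z₀ (r / 4)
      rw [← hz₀]
      exact mem_ball_self (by linarith)
  have hVsource : V ⊆ e.source := fun y hy => hy.2.1
  -- Claim A : the vector field vanishes on V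
  have claimA : ∀ y ∈ V, X (e y) = 0 := by
    intro y hy
    obtain ⟨⟨hyU, hyf⟩, hyes, hyb⟩ := hy
    set p := |f y| with hpdef
    have hppos : 0 < p := abs_pos.mpr (hf0 y hyU)
    have hp2T : p < 2 * T := abs_lt.mpr hyf
    have hεp : ε * p ≤ 1 / 3 := by
      rw [hε]
      rw [div_mul_eq_mul_div, one_mul, div_le_div_iff₀ (by linarith) (by norm_num)]
      nlinarith
    have hper : α p y = y := by
      rcases abs_cases (f y) with ⟨h1, _⟩ | ⟨h1, _⟩
      · rw [hpdef, h1]; exact hfper y hyU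
      · rw [hpdef, h1]
        calc α (-(f y)) y = α (-(f y)) (α (f y) y) := by rw [hfper y hyU]
        _ = α (-(f y) + f y) y := (hαadd _ _ _).symm
        _ = y := by rw [neg_add_cancel]; exact hα0 y
    set c : ℝ → E := fun t => e (α t y) with hc
    set P : ℝ → Prop := fun t => α t y ∈ e.source with hP
    have hder : ∀ t, P t → HasDerivAt c (X (c t)) t := fun t ht => hcder y t ht
    have hPopen : IsOpen {t | P t} := hsopen.preimage (hcont1 y)
    have hP0 : P 0 := by show α 0 y ∈ e.source; rw [hα0]; exact hyes
    have hc0b : c 0 ∈ closedBall z₀ (r / 4) := by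
      show e (α 0 y) ∈ _
      rw [hα0]
      exact ball_subset_closedBall hyb
    have hlim : ∀ t ∈ Ioc 0 p, (∀ s ∈ Ico 0 t, P s ∧ c s ∈ closedBall z₀ (2 / 3 * r)) →
        P t ∧ c t ∈ closedBall z₀ (2 / 3 * r) := by
      intro t ht hpre
      have hKsub : closedBall z₀ (2 / 3 * r) ⊆ e.target :=
        subset_trans (closedBall_subset_closedBall (by linarith)) hballt
      set K : Set M := e.symm '' closedBall z₀ (2 / 3 * r) with hK
      have hKcomp : IsCompact K :=
        (isCompact_closedBall z₀ _).image_of_continuousOn (hsymm_cont.mono hKsub)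
      have htend : Tendsto (fun s => α s y) (𝓝[<] t) (𝓝 (α t y)) :=
        ((hcont1 y).tendsto t).mono_left nhdsWithin_le_nhds
      have hevK : ∀ᶠ s in 𝓝[<] t, α s y ∈ K := by
        have hIoo : Ioo 0 t ∈ 𝓝[<] t := Ioo_mem_nhdsLT_of_mem ⟨ht.1, le_refl t⟩
        filter_upwards [hIoo] with s hs
        have hQ := hpre s ⟨hs.1.le, hs.2⟩
        exact ⟨c s, hQ.2, e.left_inv hQ.1⟩
      have hmemK : α t y ∈ K := hKcomp.isClosed.mem_of_tendsto htend hevK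
      obtain ⟨w, hw, hwe⟩ := hmemK
      have hwt : w ∈ e.target := hKsub hw
      have hPt : P t := by show α t y ∈ e.source; rw [← hwe]; exact e.map_target hwt
      refine ⟨hPt, ?_⟩
      show e (α t y) ∈ _
      rw [← hwe, e.right_inv hwt]
      exact hw
    have hQall := confine X z₀ ε r p hr0 hppos.le hεp hεpos.le hXb c P hP0 hc0b hder hPopen hlim
    have hX0' := core_zero X z₀ ε r p hppos hεp hεpos.le hLip c
      (fun t ht => hder t (hQall t ht).1)
      (fun t ht => closedBall_subset_closedBall (by linarith) (hQall t ht).2)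
      (by show e (α p y) = e (α 0 y); rw [hper, hα0])
    have hc0 : c 0 = e y := by show e (α 0 y) = e y; rw [hα0]
    rwa [hc0] at hX0'
  -- Claim B : every point of V is fixed
  have claimB : ∀ y ∈ V, ∀ t, α t y = y := by
    intro y hy
    have hNopen : IsOpen {s : ℝ | α s y ∈ V} := hVopen.preimage (hcont1 y)
    have hN0 : (0:ℝ) ∈ {s : ℝ | α s y ∈ V} := by show α 0 y ∈ V; rw [hα0]; exact hy
    obtain ⟨η₀, hη₀, hball'⟩ := Metric.isOpen_iff.mp hNopen 0 hN0
    set η := η₀ / 2 with hη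
    have hηpos : 0 < η := by positivity
    have hIccV : ∀ s ∈ Icc (0:ℝ) η, α s y ∈ V := by
      intro s hs
      apply hball'
      rw [mem_ball, Real.dist_eq, sub_zero, abs_of_nonneg hs.1]
      linarith [hs.2]
    have hder0 : ∀ s ∈ Icc (0:ℝ) η, HasDerivAt (fun t => e (α t y)) 0 s := by
      intro s hs
      have h1 := hcder y s (hVsource (hIccV s hs))
      rwa [claimA _ (hIccV s hs)] at h1
    have hconst := constant_of_has_deriv_right_zero
      (f := fun t => e (α t y)) (a := 0) (b := η)
      (fun s hs => (hder0 s hs).continuousAt.continuousWithinAt)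
      (fun s hs => (hder0 s (Ico_subset_Icc_self hs)).hasDerivWithinAt)
    have hsmall : ∀ s ∈ Icc (0:ℝ) η, α s y = y := by
      intro s hs
      have h1 : e (α s y) = e (α 0 y) := hconst s hs
      have h2 : α s y ∈ e.source := hVsource (hIccV s hs)
      have h3 : α 0 y ∈ e.source := by rw [hα0]; exact hVsource hy
      calc α s y = e.symm (e (α s y)) := (e.left_inv h2).symm
      _ = e.symm (e (α 0 y)) := by rw [h1]
      _ = α 0 y := e.left_inv h3
      _ = y := hα0 y
    exact fix_of_interval α hα0 hαadd y η hηpos hsmall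
  exact mem_interior.mpr ⟨V, fun y hy t => claimB y hy t, hVopen, hxV⟩

end key

/-- Let `α` be a smooth action of `ℝ` on a smooth manifold `M`, `W` the interior of its
fixed-point set and `Per(α)` its set of stably periodic points.  Then the set
`Per(α) \ W` of nontrivial stably periodic points is open in `M`. -/
theorem isOpen_nontrivial_stablyPeriodic
    {E : Type*} [NormedAddCommGroup E] [NormedSpace ℝ E] [FiniteDimensional ℝ E]
    {H : Type*} [TopologicalSpace H] {I : ModelWithCorners ℝ E H} [I.Boundaryless]
    {M : Type*} [TopologicalSpace M] [ChartedSpace H M] [IsManifold I (⊤ : ℕ∞) M]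
    [T2Space M] [SecondCountableTopology M]
    (α : ℝ → M → M)
    (hα : ContMDiff (𝓘(ℝ, ℝ).prod I) I (⊤ : ℕ∞) fun p : ℝ × M ↦ α p.1 p.2)
    (hα0 : ∀ x, α 0 x = x)
    (hαadd : ∀ s t x, α (s + t) x = α s (α t x)) :
    IsOpen ({x | ∃ U : Set M, IsOpen U ∧ x ∈ U ∧ ∃ f : M → ℝ,
          ContMDiffOn I 𝓘(ℝ, ℝ) (⊤ : ℕ∞) f U ∧ (∀ y ∈ U, f y ≠ 0) ∧ ∀ y ∈ U, α (f y) y = y} \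
        interior {x | ∀ t, α t x = x}) := by
  rw [isOpen_iff_forall_mem_open]
  rintro x ⟨⟨U, hU, hxU, f, hf, hf0, hfper⟩, hxW⟩
  have hxncl : x ∉ closure (interior {x : M | ∀ t, α t x = x}) := fun hcl =>
    hxW (key α hα hα0 hαadd hU hxU hf.continuousOn hf0 hfper hcl)
  refine ⟨U ∩ (closure (interior {x : M | ∀ t, α t x = x}))ᶜ, ?_,
    hU.inter isClosed_closure.isOpen_compl, hxU, hxncl⟩
  rintro y ⟨hyU, hycl⟩
  exact ⟨⟨U, hU, hyU, f, hf, hf0, hfper⟩, fun hyW => hycl (subset_closure hyW)⟩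
end

section
/- Let α be a smooth action of ℝ on a smooth manifold M, W the interior of its fixed-point set, and Per(α) its set of stably periodic points. For x in the set Per(α) \ W of nontrivial stably periodic points, let p(x) denote the infimum of the set of t > 0 for which there exist an open neighborhood U of x and a smooth function f : U → ℝ with f(x) = t and α(f(y), y) = y for all y ∈ U. Then p(x) > 0 for every x ∈ Per(α) \ W, and the function p : Per(α) \ W → ℝ is smooth on the open set Per(α) \ W. -/
set_option linter.unusedSectionVars false

open scoped Manifold
open Set Filter Function Topology

section Aux

variable {E : Type*} [NormedAddCommGroup E] [NormedSpace ℝ E] [FiniteDimensional ℝ E]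
    {H : Type*} [TopologicalSpace H] {I : ModelWithCorners ℝ E H} [I.Boundaryless]
    {M : Type*} [TopologicalSpace M] [ChartedSpace H M] [IsManifold I (⊤ : ℕ∞) M]
    [T2Space M] [SecondCountableTopology M]

variable (α : ℝ → M → M)

/-- The set of values at `x` of smooth local "period functions" at `x`, positive part. -/
def PerVals (x : M) : Set ℝ :=
  {t : ℝ | 0 < t ∧ ∃ U : Set M, IsOpen U ∧ x ∈ U ∧
    ∃ f : M → ℝ, ContMDiffOn I 𝓘(ℝ, ℝ) (⊤ : ℕ∞) f U ∧ f x = t ∧ ∀ y ∈ U, α (f y) y = y}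

variable {α}

section Group

theorem per_neg (hα0 : ∀ x, α 0 x = x) (hαadd : ∀ s t x, α (s + t) x = α s (α t x))
    {z : M} {t : ℝ} (h : α t z = z) : α (-t) z = z := by
  have := hαadd (-t) t z
  rw [h, neg_add_cancel, hα0] at this
  exact this.symm

theorem per_add (hαadd : ∀ s t x, α (s + t) x = α s (α t x))
    {z : M} {s t : ℝ} (hs : α s z = z) (ht : α t z = z) : α (s + t) z = z := by
  rw [hαadd, ht, hs]

theorem per_sub (hα0 : ∀ x, α 0 x = x) (hαadd : ∀ s t x, α (s + t) x = α s (α t x))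
    {z : M} {s t : ℝ} (hs : α s z = z) (ht : α t z = z) : α (s - t) z = z := by
  have := per_add hαadd hs (per_neg hα0 hαadd ht)
  rwa [sub_eq_add_neg]

theorem per_nsmul (hα0 : ∀ x, α 0 x = x) (hαadd : ∀ s t x, α (s + t) x = α s (α t x))
    {z : M} {t : ℝ} (h : α t z = z) : ∀ n : ℕ, α (n * t) z = z := by
  intro n
  induction n with
  | zero => simpa using hα0 z
  | succ n ih =>
    have : ((n : ℝ) + 1) * t = t + n * t := by ring
    rw [Nat.cast_succ, this, hαadd, ih, h]

/-- If all small nonnegative times fix `z`, then `z` is a fixed point. -/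
theorem fix_of_small (hα0 : ∀ x, α 0 x = x) (hαadd : ∀ s t x, α (s + t) x = α s (α t x))
    {z : M} {t : ℝ} (ht : 0 < t)
    (h : ∀ s ∈ Icc (0:ℝ) t, α s z = z) : ∀ s, α s z = z := by
  -- first, multiples of t fix z
  have hmul : ∀ n : ℕ, α (n * t) z = z := per_nsmul hα0 hαadd (h t ⟨le_of_lt ht, le_refl t⟩)
  have key : ∀ s : ℝ, 0 ≤ s → α s z = z := by
    intro s hs
    set n : ℕ := ⌊s / t⌋₊ with hn
    have h1 : (n : ℝ) * t ≤ s := by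
      rw [hn]
      calc (⌊s / t⌋₊ : ℝ) * t ≤ s / t * t := by
            apply mul_le_mul_of_nonneg_right (Nat.floor_le (by positivity)) (le_of_lt ht)
        _ = s := by field_simp
    have h2 : s - n * t < t := by
      have := Nat.lt_floor_add_one (s / t)
      have h3 : s / t < n + 1 := by rw [hn]; exact_mod_cast this
      have := (div_lt_iff₀ ht).1 h3
      nlinarith
    have : α ((s - n * t) + n * t) z = z := by
      rw [hαadd, hmul n, h _ ⟨by linarith, le_of_lt h2⟩]
    simpa using this
  intro s
  rcases le_or_gt 0 s with hs | hs
  · exact key s hs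
  · have h1 : α (-s) z = z := key (-s) (by linarith)
    have := per_neg hα0 hαadd h1
    simpa using this

end Group

/-- Key lemma: near any point, sufficiently small nonzero periods force a point
to be fixed. -/
theorem key_small_period (hα : ContMDiff (𝓘(ℝ, ℝ).prod I) I (⊤ : ℕ∞) fun p : ℝ × M ↦ α p.1 p.2)
    (hα0 : ∀ x, α 0 x = x) (hαadd : ∀ s t x, α (s + t) x = α s (α t x)) (x : M) :
    ∃ δ : ℝ, 0 < δ ∧ ∃ V : Set M, IsOpen V ∧ x ∈ V ∧
      ∀ z ∈ V, ∀ t : ℝ, 0 < t → t < δ → α t z = z → ∀ s, α s z = z := by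
  classical
  set ψ := extChartAt I x with hψdef
  have hsrc_open : IsOpen ψ.source := isOpen_extChartAt_source x
  have hxsrc : x ∈ ψ.source := mem_extChartAt_source x
  have htgt_open : IsOpen ψ.target := isOpen_extChartAt_target x
  have hxtgt : ψ x ∈ ψ.target := ψ.map_source hxsrc
  obtain ⟨r0, hr0pos, hball⟩ := Metric.isOpen_iff.1 htgt_open _ hxtgt
  set r : ℝ := r0 / 3 with hrdef
  have hrpos : 0 < r := by positivity
  have hball2 : Metric.closedBall (ψ x) (2 * r) ⊆ ψ.target := by
    intro w hw
    apply hball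
    have h1 : dist w (ψ x) ≤ 2 * r := hw
    have h2 : 2 * r < r0 := by rw [hrdef]; linarith
    exact lt_of_le_of_lt h1 h2
  -- the flow read in the chart
  set Φ : ℝ × E → M := fun q => α q.1 (ψ.symm q.2) with hΦdef
  set F : ℝ × E → E := fun q => ψ (Φ q) with hFdef
  set D : Set (ℝ × E) := {q | q.2 ∈ ψ.target ∧ Φ q ∈ ψ.source} with hDdef
  have hΦcont : ContinuousOn Φ (univ ×ˢ ψ.target) := by
    have h0 : ContinuousOn (fun q : ℝ × E => ((q.1, ψ.symm q.2) : ℝ × M)) (univ ×ˢ ψ.target) :=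
      (continuous_fst.continuousOn).prodMk
        ((continuousOn_extChartAt_symm x).comp (continuous_snd.continuousOn) fun q hq => hq.2)
    exact (hα.continuous.comp_continuousOn h0).congr fun q hq => rfl
  have hDeq : D = (univ ×ˢ ψ.target) ∩ Φ ⁻¹' ψ.source := by
    ext q; simp [hDdef, Set.mem_prod]
  have hDopen : IsOpen D := by
    rw [hDeq]
    exact hΦcont.isOpen_inter_preimage (isOpen_univ.prod htgt_open) hsrc_open
  have hDsub : D ⊆ univ ×ˢ ψ.target := fun q hq => ⟨trivial, hq.1⟩
  have hcast1 : (1 : WithTop ℕ∞) ≤ ((⊤ : ℕ∞) : WithTop ℕ∞) := by exact_mod_cast le_top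
  have hcast2 : ((⊤ : ℕ∞) : WithTop ℕ∞) + 1 ≤ ((⊤ : ℕ∞) : WithTop ℕ∞) := by norm_cast
  have hΦsmooth : ContMDiffOn 𝓘(ℝ, ℝ × E) I (⊤ : ℕ∞) Φ (univ ×ˢ ψ.target) := by
    have h1 : ContMDiffOn 𝓘(ℝ, ℝ × E) (𝓘(ℝ, ℝ).prod I) (⊤ : ℕ∞)
        (fun q : ℝ × E => ((q.1, ψ.symm q.2) : ℝ × M)) (univ ×ˢ ψ.target) := by
      apply ContMDiffOn.prodMk
      · exact (contDiff_fst.contMDiff).contMDiffOn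
      · exact (contMDiffOn_extChartAt_symm x).comp
          ((contDiff_snd.contMDiff).contMDiffOn) fun q hq => hq.2
    exact (hα.contMDiffOn).comp h1 (Set.subset_preimage_univ)
  have hFsmooth : ContDiffOn ℝ ((⊤ : ℕ∞) : WithTop ℕ∞) F D := by
    have hmt : D ⊆ Φ ⁻¹' (chartAt H x).source := by
      intro q hq
      show Φ q ∈ (chartAt H x).source
      rw [← extChartAt_source (I := I)]
      exact hq.2
    have h2 := ContMDiffOn.contDiffOn
      ((contMDiffOn_extChartAt (n := (⊤ : ℕ∞))).comp (hΦsmooth.mono hDsub) hmt)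
    simpa [Function.comp_def, hFdef, hψdef] using h2
  set Vf : E → E := fun w => fderiv ℝ F (0, w) (1, 0) with hVfdef
  have hmemD : ∀ w ∈ ψ.target, ((0 : ℝ), w) ∈ D := by
    intro w hw
    refine ⟨hw, ?_⟩
    show α 0 (ψ.symm w) ∈ ψ.source
    rw [hα0]
    exact ψ.map_target hw
  -- basic derivative formula
  have hud : ∀ (z : M) (s₀ : ℝ), α s₀ z ∈ ψ.source →
      HasDerivAt (fun s => ψ (α s z)) (Vf (ψ (α s₀ z))) s₀ := by
    intro z s₀ hz
    set w₀ : E := ψ (α s₀ z) with hw₀def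
    have hw₀tgt : w₀ ∈ ψ.target := ψ.map_source hz
    have hsymm : ψ.symm w₀ = α s₀ z := ψ.left_inv hz
    have hmem : ((0 : ℝ), w₀) ∈ D := hmemD w₀ hw₀tgt
    have hdiff : DifferentiableAt ℝ F (0, w₀) :=
      (hFsmooth.differentiableOn (by simp)).differentiableAt (hDopen.mem_nhds hmem)
    have hcurve : HasDerivAt (fun t : ℝ => ((t, w₀) : ℝ × E)) ((1 : ℝ), (0 : E)) 0 := by
      simpa using (hasDerivAt_id (0 : ℝ)).prodMk (hasDerivAt_const (0 : ℝ) w₀)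
    have h5 : HasDerivAt (fun t : ℝ => F (t, w₀)) (Vf w₀) 0 := by
      have := hdiff.hasFDerivAt.comp_hasDerivAt (0 : ℝ) hcurve
      exact this
    have h7 : HasDerivAt (fun s : ℝ => s - s₀) 1 s₀ := (hasDerivAt_id s₀).sub_const s₀
    have h6 : HasDerivAt (fun s : ℝ => F (s - s₀, w₀)) (Vf w₀) s₀ := by
      have := h5.scomp_of_eq s₀ h7 (by simp)
      rw [one_smul] at this
      exact this
    have h8 : (fun s : ℝ => ψ (α s z)) = fun s : ℝ => F (s - s₀, w₀) := by
      funext s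
      show ψ (α s z) = ψ (α (s - s₀) (ψ.symm w₀))
      rw [hsymm, ← hαadd]
      norm_num
    rw [h8]
    exact h6
  -- regularity of the vector field in the chart
  have hVfsmooth : ContDiffOn ℝ ((⊤ : ℕ∞) : WithTop ℕ∞) Vf ψ.target := by
    have hfd : ContDiffOn ℝ ((⊤ : ℕ∞) : WithTop ℕ∞) (fun q => fderiv ℝ F q) D :=
      hFsmooth.fderiv_of_isOpen hDopen hcast2
    have h9 : ContDiffOn ℝ ((⊤ : ℕ∞) : WithTop ℕ∞) (fun w : E => fderiv ℝ F (0, w)) ψ.target :=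
      hfd.comp ((contDiff_const.prodMk contDiff_id).contDiffOn) hmemD
    exact h9.clm_apply contDiffOn_const
  -- bounds
  obtain ⟨M₀, hM₀⟩ := (isCompact_closedBall (ψ x) (2 * r)).exists_bound_of_continuousOn
    (hVfsmooth.continuousOn.mono hball2)
  have hM₀0 : 0 ≤ M₀ :=
    le_trans (norm_nonneg _) (hM₀ (ψ x) (Metric.mem_closedBall_self (by positivity)))
  obtain ⟨CL, hCL⟩ := (isCompact_closedBall (ψ x) (2 * r)).exists_bound_of_continuousOn
    ((hVfsmooth.continuousOn_fderiv_of_isOpen htgt_open hcast1).mono hball2)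
  have hCL0 : 0 ≤ CL :=
    le_trans (norm_nonneg _) (hCL (ψ x) (Metric.mem_closedBall_self (by positivity)))
  have hlip : ∀ a ∈ Metric.ball (ψ x) (2 * r), ∀ b ∈ Metric.ball (ψ x) (2 * r),
      ‖Vf a - Vf b‖ ≤ CL * ‖a - b‖ := by
    intro a ha b hb
    have hsub : Metric.ball (ψ x) (2 * r) ⊆ ψ.target :=
      le_trans Metric.ball_subset_closedBall hball2
    exact Convex.norm_image_sub_le_of_norm_fderiv_le
      (fun w hw => (hVfsmooth.differentiableOn (by simp)).differentiableAt
        (htgt_open.mem_nhds (hsub hw)))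
      (fun w hw => hCL w (Metric.ball_subset_closedBall hw))
      (convex_ball _ _) hb ha
  set δ : ℝ := min (1 / (2 * (CL + 1))) (r / (8 * (M₀ + 1))) with hδdef
  have hδpos : 0 < δ := by
    apply lt_min <;> positivity
  refine ⟨δ, hδpos, ψ.source ∩ ψ ⁻¹' Metric.ball (ψ x) (r / 8), ?_, ?_, ?_⟩
  · exact (continuousOn_extChartAt x).isOpen_inter_preimage hsrc_open Metric.isOpen_ball
  · exact ⟨hxsrc, Metric.mem_ball_self (by positivity)⟩
  intro z hz t ht htδ hper
  set u : ℝ → E := fun s => ψ (α s z) with hudef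
  have hΓcont : Continuous fun s : ℝ => α s z :=
    hα.continuous.comp (continuous_id.prodMk continuous_const)
  set Tgood : Set ℝ := {s | α s z ∈ ψ.source ∧ u s ∈ Metric.ball (ψ x) (r / 2)} with hTdef
  have hTopen : IsOpen Tgood := by
    have hTeq : Tgood = (fun s => α s z) ⁻¹'
        (ψ.source ∩ ψ ⁻¹' Metric.ball (ψ x) (r / 2)) := by
      ext s
      simp only [hTdef, mem_setOf_eq, mem_preimage, mem_inter_iff]
      exact Iff.rfl
    rw [hTeq]
    exact ((continuousOn_extChartAt x).isOpen_inter_preimage hsrc_open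
      Metric.isOpen_ball).preimage hΓcont
  have hu0 : u 0 = ψ z := by rw [hudef]; simp [hα0]
  have h0good : (0 : ℝ) ∈ Tgood := by
    constructor
    · show α 0 z ∈ ψ.source; rw [hα0]; exact hz.1
    · show u 0 ∈ Metric.ball (ψ x) (r / 2)
      rw [hu0]
      have := hz.2
      simp only [mem_preimage] at this
      exact Metric.ball_subset_ball (by linarith) this
  have hM₀δ : M₀ * δ ≤ r / 8 := by
    have h1 : δ ≤ r / (8 * (M₀ + 1)) := min_le_right _ _
    have h2 : M₀ * δ ≤ M₀ * (r / (8 * (M₀ + 1)))  :=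
      mul_le_mul_of_nonneg_left h1 hM₀0
    have h3 : M₀ * (r / (8 * (M₀ + 1))) ≤ r / 8 := by
      rw [show M₀ * (r / (8 * (M₀ + 1))) = M₀ * r / (8 * (M₀ + 1)) from by ring,
        div_le_div_iff₀ (by positivity) (by norm_num)]
      nlinarith
    linarith
  -- confinement of the orbit in the chart
  have hconf : Icc (0 : ℝ) t ⊆ Tgood := by
    by_contra hcon
    obtain ⟨b, hbIcc, hbT⟩ := not_subset.1 hcon
    set B : Set ℝ := Icc (0 : ℝ) t \ Tgood with hBdef
    have hBne : B.Nonempty := ⟨b, hbIcc, hbT⟩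
    have hBbdd : BddBelow B := ⟨0, fun s hs => hs.1.1⟩
    set s₀ := sInf B with hs₀def
    have hs₀cl : s₀ ∈ closure B := csInf_mem_closure hBne hBbdd
    have hclsub : closure B ⊆ Icc 0 t ∩ Tgoodᶜ :=
      closure_minimal (fun s hs => ⟨hs.1, hs.2⟩) (isClosed_Icc.inter hTopen.isClosed_compl)
    obtain ⟨hs₀Icc, hs₀nT⟩ := hclsub hs₀cl
    have hs₀pos : 0 < s₀ := by
      rcases lt_or_eq_of_le hs₀Icc.1 with h | h
      · exact h
      · exact absurd h0good (h ▸ hs₀nT)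
    have hIco : Ico (0 : ℝ) s₀ ⊆ Tgood := by
      intro σ hσ
      by_contra hσT
      have hσB : σ ∈ B := ⟨⟨hσ.1, le_trans hσ.2.le hs₀Icc.2⟩, hσT⟩
      exact absurd (csInf_le hBbdd hσB) (not_le.2 hσ.2)
    have hbd : ∀ σ ∈ Ico (0 : ℝ) s₀, u σ ∈ Metric.closedBall (ψ x) (r / 4) := by
      intro σ hσ
      have hsub : ∀ τ ∈ Ico (0 : ℝ) s₀, HasDerivWithinAt u (Vf (u τ)) (Ico 0 s₀) τ :=
        fun τ hτ => (hud z τ (hIco hτ).1).hasDerivWithinAt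
      have hbound : ∀ τ ∈ Ico (0 : ℝ) s₀, ‖Vf (u τ)‖ ≤ M₀ := by
        intro τ hτ
        apply hM₀
        have h := Metric.mem_ball.1 (hIco hτ).2
        exact Metric.mem_closedBall.2 (by linarith)
      have h10 : ‖u σ - u 0‖ ≤ M₀ * ‖σ - 0‖ :=
        Convex.norm_image_sub_le_of_norm_hasDerivWithin_le hsub hbound (convex_Ico _ _)
          ⟨le_refl 0, hs₀pos⟩ hσ
      have h11 : ‖σ - 0‖ ≤ δ := by
        rw [sub_zero, Real.norm_eq_abs, abs_of_nonneg hσ.1]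
        have := hσ.2
        have := hs₀Icc.2
        linarith
      have h12 : ‖u σ - u 0‖ ≤ r / 8 := by
        calc ‖u σ - u 0‖ ≤ M₀ * ‖σ - 0‖ := h10
          _ ≤ M₀ * δ := mul_le_mul_of_nonneg_left h11 hM₀0
          _ ≤ r / 8 := hM₀δ
      have h13 : dist (u 0) (ψ x) < r / 8 := by
        rw [hu0]
        have := hz.2
        simpa [mem_preimage] using this
      have h14 : dist (u σ) (ψ x) ≤ r / 4 := by
        calc dist (u σ) (ψ x) ≤ dist (u σ) (u 0) + dist (u 0) (ψ x) := dist_triangle _ _ _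
          _ ≤ r / 8 + r / 8 := by
              apply add_le_add _ (le_of_lt h13)
              rw [dist_eq_norm]; exact h12
          _ = r / 4 := by ring
      exact h14
    -- pass to the limit at s₀
    have hK'sub : Metric.closedBall (ψ x) (r / 4) ⊆ ψ.target := by
      intro w hw
      apply hball2
      exact Metric.closedBall_subset_closedBall (by linarith) hw
    have hK'cpt : IsCompact (ψ.symm '' Metric.closedBall (ψ x) (r / 4)) :=
      (isCompact_closedBall _ _).image_of_continuousOn
        ((continuousOn_extChartAt_symm x).mono hK'sub)
    have hne : (𝓝[Ico (0 : ℝ) s₀] s₀).NeBot := by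
      rw [← mem_closure_iff_nhdsWithin_neBot, closure_Ico (ne_of_lt hs₀pos)]
      exact ⟨le_of_lt hs₀pos, le_refl _⟩
    have htend : Tendsto (fun σ => α σ z) (𝓝[Ico (0 : ℝ) s₀] s₀) (𝓝 (α s₀ z)) :=
      (hΓcont.tendsto s₀).mono_left nhdsWithin_le_nhds
    have hmemK : α s₀ z ∈ ψ.symm '' Metric.closedBall (ψ x) (r / 4) := by
      apply hK'cpt.isClosed.mem_of_tendsto htend
      filter_upwards [self_mem_nhdsWithin] with σ hσ
      exact ⟨u σ, hbd σ hσ, ψ.left_inv (hIco hσ).1⟩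
    obtain ⟨w', hw', heq⟩ := hmemK
    have h1 : α s₀ z ∈ ψ.source := by
      rw [← heq]; exact ψ.map_target (hK'sub hw')
    have h2 : u s₀ ∈ Metric.ball (ψ x) (r / 2) := by
      have h3 : u s₀ = w' := by
        show ψ (α s₀ z) = w'
        rw [← heq, ψ.right_inv (hK'sub hw')]
      rw [h3]
      exact Metric.mem_ball.2 (lt_of_le_of_lt (Metric.mem_closedBall.1 hw') (by linarith))
    exact hs₀nT ⟨h1, h2⟩
  -- now the integral estimate on [0, t]
  have hderI : ∀ s ∈ Icc (0 : ℝ) t, HasDerivAt u (Vf (u s)) s :=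
    fun s hs => hud z s (hconf hs).1
  have hucont : ContinuousOn u (Icc 0 t) :=
    fun s hs => ((hderI s hs).continuousAt).continuousWithinAt
  have humem : ∀ s ∈ Icc (0 : ℝ) t, u s ∈ Metric.ball (ψ x) (2 * r) := by
    intro s hs
    exact Metric.ball_subset_ball (by linarith) (hconf hs).2
  have hVfu_cont : ContinuousOn (fun s => Vf (u s)) (Icc 0 t) := by
    apply (hVfsmooth.continuousOn.mono
      (le_trans Metric.ball_subset_closedBall hball2)).comp hucont
    exact fun s hs => humem s hs
  obtain ⟨sm, hsmIcc, hsmmax⟩ := isCompact_Icc.exists_isMaxOn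
    (⟨0, left_mem_Icc.2 ht.le⟩) hVfu_cont.norm
  set Mv : ℝ := ‖Vf (u sm)‖ with hMvdef
  have hMv0 : 0 ≤ Mv := norm_nonneg _
  have hpair : ∀ s ∈ Icc (0 : ℝ) t, ∀ s' ∈ Icc (0 : ℝ) t, ‖u s - u s'‖ ≤ Mv * t := by
    intro s hs s' hs'
    have h20 : ‖u s - u s'‖ ≤ Mv * ‖s - s'‖ :=
      Convex.norm_image_sub_le_of_norm_hasDerivWithin_le
        (fun σ hσ => (hderI σ hσ).hasDerivWithinAt)
        (fun σ hσ => hsmmax hσ) (convex_Icc _ _) hs' hs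
    have h21 : ‖s - s'‖ ≤ t := by
      rw [Real.norm_eq_abs, abs_sub_le_iff]
      constructor <;> [linarith [hs.1, hs.2, hs'.1, hs'.2]; linarith [hs.1, hs.2, hs'.1, hs'.2]]
    calc ‖u s - u s'‖ ≤ Mv * ‖s - s'‖ := h20
      _ ≤ Mv * t := mul_le_mul_of_nonneg_left h21 hMv0
  have hintegrable : IntervalIntegrable (fun s => Vf (u s)) MeasureTheory.volume 0 t := by
    apply ContinuousOn.intervalIntegrable
    rwa [uIcc_of_le ht.le]
  have hFTC : (∫ s in (0 : ℝ)..t, Vf (u s)) = 0 := by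
    rw [intervalIntegral.integral_eq_sub_of_hasDerivAt
      (fun s hs => hderI s (by rwa [uIcc_of_le ht.le] at hs)) hintegrable]
    show u t - u 0 = 0
    rw [hu0]
    show ψ (α t z) - ψ z = 0
    rw [hper, sub_self]
  have hconstint : (∫ s in (0 : ℝ)..t, (Vf (u sm) - Vf (u s))) = t • Vf (u sm) := by
    rw [intervalIntegral.integral_sub intervalIntegrable_const hintegrable, hFTC,
      intervalIntegral.integral_const, sub_zero, sub_zero]
  have hnormbound : ‖∫ s in (0 : ℝ)..t, (Vf (u sm) - Vf (u s))‖ ≤ CL * (Mv * t) * |t - 0| := by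
    apply intervalIntegral.norm_integral_le_of_norm_le_const
    intro s hs
    have hs' : s ∈ Icc (0 : ℝ) t := by
      rw [uIoc_of_le ht.le] at hs
      exact ⟨hs.1.le, hs.2⟩
    have h1 : ‖Vf (u sm) - Vf (u s)‖ ≤ CL * ‖u sm - u s‖ :=
      hlip _ (humem sm hsmIcc) _ (humem s hs')
    calc ‖Vf (u sm) - Vf (u s)‖ ≤ CL * ‖u sm - u s‖ := h1
      _ ≤ CL * (Mv * t) := mul_le_mul_of_nonneg_left (hpair sm hsmIcc s hs') hCL0
  have hMveq0 : Mv = 0 := by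
    by_contra hne
    have hMvpos : 0 < Mv := lt_of_le_of_ne hMv0 (Ne.symm hne)
    have h31 := hnormbound
    rw [hconstint, norm_smul, Real.norm_eq_abs, sub_zero, abs_of_pos ht] at h31
    have hCLt : CL * t ≤ 1 / 2 := by
      have h1 : t ≤ 1 / (2 * (CL + 1)) := le_trans htδ.le (min_le_left _ _)
      have h2 : CL * t ≤ CL * (1 / (2 * (CL + 1))) := mul_le_mul_of_nonneg_left h1 hCL0
      have h3 : CL * (1 / (2 * (CL + 1))) ≤ 1 / 2 := by
        rw [mul_one_div, div_le_div_iff₀ (by positivity) (by norm_num)]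
        nlinarith
      linarith
    have h32 : CL * (Mv * t) * t = (CL * t) * (Mv * t) := by ring
    have h33 : (CL * t) * (Mv * t) ≤ (1 / 2) * (Mv * t) :=
      mul_le_mul_of_nonneg_right hCLt (by positivity)
    have hX : t * Mv = Mv * t := by ring
    linarith [mul_pos hMvpos ht]
  have hconstu : ∀ s ∈ Icc (0 : ℝ) t, u s = u 0 := by
    intro s hs
    have h1 := hpair s hs 0 (left_mem_Icc.2 ht.le)
    rw [hMveq0, zero_mul] at h1
    have h2 : u s - u 0 = 0 := by
      rwa [← norm_le_zero_iff]
    exact sub_eq_zero.1 h2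
  have hfixIcc : ∀ s ∈ Icc (0 : ℝ) t, α s z = z := by
    intro s hs
    have h1 : ψ (α s z) = ψ z := by
      have := hconstu s hs
      rwa [hu0] at this
    exact ψ.injOn (hconf hs).1 hz.1 h1
  exact fix_of_small hα0 hαadd ht hfixIcc

/-- Bochner-type rigidity: if `h` is a smooth period function on `U` and the set where
`h/c` is also a period accumulates (with interior) at `x`, then `h/c` is a period
function on a whole neighbourhood of `x`. -/
theorem bochner_rigidity
    (hα : ContMDiff (𝓘(ℝ, ℝ).prod I) I (⊤ : ℕ∞) fun p : ℝ × M ↦ α p.1 p.2)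
    (hα0 : ∀ x, α 0 x = x) (hαadd : ∀ s t x, α (s + t) x = α s (α t x))
    {δ : ℝ} {V : Set M} (hδ : 0 < δ) (hVopen : IsOpen V)
    (hVkey : ∀ z ∈ V, ∀ t : ℝ, 0 < t → t < δ → α t z = z → ∀ s, α s z = z)
    {U : Set M} {h : M → ℝ} (hUopen : IsOpen U)
    (hh : ContMDiffOn I 𝓘(ℝ, ℝ) (⊤ : ℕ∞) h U) (hper : ∀ z ∈ U, α (h z) z = z)
    {x : M} (hxU : x ∈ U) (hxV : x ∈ V) {c : ℕ} (hc : 2 ≤ c)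
    (hcl : x ∈ closure (interior {z | z ∈ U ∩ V ∧ α (h z / c) z = z})) :
    ∃ N : Set M, IsOpen N ∧ x ∈ N ∧ ∀ z ∈ N, α (h z / c) z = z := by
  classical
  haveI : CompleteSpace E := FiniteDimensional.complete ℝ E
  have hc0 : (0 : ℝ) < (c : ℝ) := by exact_mod_cast Nat.lt_of_lt_of_le Nat.zero_lt_two hc
  have hcancel : ∀ (a : ℝ) (w : M), α (-a) (α a w) = w := by
    intro a w; rw [← hαadd]; simp [hα0]
  have hcast1 : (1 : WithTop ℕ∞) ≤ ((⊤ : ℕ∞) : WithTop ℕ∞) := by exact_mod_cast le_top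
  set Z : Set M := {z | z ∈ U ∩ V ∧ α (h z / c) z = z} with hZdef
  set Ψ : M → M := fun z => α (h z / c) z with hΨdef
  have hZsubU : Z ⊆ U := fun z hz => hz.1.1
  have hΨcont : ContinuousOn Ψ U := by
    have h0 : ContinuousOn (fun z => ((h z / c, z) : ℝ × M)) U :=
      (hh.continuousOn.div_const _).prodMk continuousOn_id
    exact (hα.continuous.comp_continuousOn h0).congr fun z hz => rfl
  -- the point x itself satisfies the relation, by passing to the limit
  have hxZrel : Ψ x = x := by
    have hne : (𝓝[interior Z] x).NeBot := mem_closure_iff_nhdsWithin_neBot.1 hcl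
    have hsub : interior Z ⊆ U := fun z hz => hZsubU (interior_subset hz)
    have h1 : Tendsto Ψ (𝓝[interior Z] x) (𝓝 (Ψ x)) :=
      ((hΨcont x hxU).mono hsub)
    have h2 : Tendsto Ψ (𝓝[interior Z] x) (𝓝 x) := by
      refine Tendsto.congr' ?_ (tendsto_id.mono_left nhdsWithin_le_nhds)
      filter_upwards [self_mem_nhdsWithin] with z hz
      exact ((interior_subset hz : z ∈ Z).2).symm
    exact tendsto_nhds_unique h1 h2
  -- chart data
  set ψ := extChartAt I x with hψdef
  have hsrc_open : IsOpen ψ.source := isOpen_extChartAt_source x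
  have hxsrc : x ∈ ψ.source := mem_extChartAt_source x
  have htgt_open : IsOpen ψ.target := isOpen_extChartAt_target x
  have hxtgt : ψ x ∈ ψ.target := ψ.map_source hxsrc
  -- the iterates along the flow
  set q : ℕ → M → M := fun i z => α (i * (h z / c)) z with hqdef
  have hqcont : ∀ i : ℕ, ContinuousOn (q i) U := by
    intro i
    have h0 : ContinuousOn (fun z => (((i : ℝ) * (h z / c), z) : ℝ × M)) U :=
      (continuousOn_const.mul (hh.continuousOn.div_const _)).prodMk continuousOn_id
    exact (hα.continuous.comp_continuousOn h0).congr fun z hz => rfl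
  have hqx : ∀ i : ℕ, q i x = x := by
    intro i
    induction i with
    | zero => show α ((0 : ℕ) * (h x / c)) x = x; rw [Nat.cast_zero, zero_mul, hα0]
    | succ i ih =>
      show α ((i + 1 : ℕ) * (h x / c)) x = x
      have harith : ((i + 1 : ℕ) : ℝ) * (h x / c) = h x / c + (i : ℝ) * (h x / c) := by
        push_cast; ring
      rw [harith, hαadd]
      have : α ((i : ℝ) * (h x / c)) x = x := ih
      rw [this]
      exact hxZrel
  -- the basic open neighbourhood where everything is controlled
  set G : Set M := U ∩ V ∩ ψ.source with hGdef
  have hGopen : IsOpen G := (hUopen.inter hVopen).inter hsrc_open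
  have hxG : x ∈ G := ⟨⟨hxU, hxV⟩, hxsrc⟩
  have hGU : G ⊆ U := fun z hz => hz.1.1
  set B : ℕ → Set M := fun i =>
    (G ∩ q i ⁻¹' G) ∩ (fun z => h (q i z) - h z) ⁻¹' Metric.ball 0 δ with hBdef
  have hBopen : ∀ i, IsOpen (B i) := by
    intro i
    have h1 : IsOpen (G ∩ q i ⁻¹' G) :=
      ((hqcont i).mono hGU).isOpen_inter_preimage hGopen hGopen
    have h2 : ContinuousOn (fun z => h (q i z) - h z) (G ∩ q i ⁻¹' G) := by
      apply ContinuousOn.sub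
      · exact (hh.continuousOn.comp (((hqcont i).mono hGU).mono inter_subset_left)
          fun z hz => hGU hz.2)
      · exact hh.continuousOn.mono fun z hz => hGU hz.1
    exact h2.isOpen_inter_preimage h1 Metric.isOpen_ball
  have hxB : ∀ i, x ∈ B i := by
    intro i
    refine ⟨⟨hxG, ?_⟩, ?_⟩
    · show q i x ∈ G; rw [hqx i]; exact hxG
    · show (fun z => h (q i z) - h z) x ∈ Metric.ball 0 δ
      simp only [hqx i, sub_self]
      exact Metric.mem_ball_self hδ
  set N₀ : Set M := ⋂ i ∈ Finset.range (c + 1), B i with hN₀def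
  have hN₀open : IsOpen N₀ := isOpen_biInter_finset fun i _ => hBopen i
  have hxN₀ : x ∈ N₀ := mem_biInter fun i _ => hxB i
  have hN₀G : N₀ ⊆ G := by
    intro z hz
    have h1 : z ∈ B 0 := Set.mem_iInter₂.1 hz 0 (Finset.mem_range.2 (Nat.succ_pos c))
    exact h1.1.1
  -- membership extraction
  have hmemB : ∀ z ∈ N₀, ∀ i : ℕ, i ≤ c → (q i z ∈ G ∧ |h (q i z) - h z| < δ) := by
    intro z hz i hi
    have h1 : z ∈ B i := Set.mem_iInter₂.1 hz i (Finset.mem_range.2 (Nat.lt_succ_of_le hi))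
    refine ⟨h1.1.2, ?_⟩
    have h2 := h1.2
    simp only [mem_preimage, Metric.mem_ball, Real.dist_eq, sub_zero] at h2
    exact h2
  -- Step A : key identities on N₀
  have hstepA : ∀ z ∈ N₀, ∀ i : ℕ, i ≤ c → (h (q i z) = h z ∧ Ψ^[i] z = q i z) := by
    intro z hz
    have hzG : z ∈ G := hN₀G hz
    have hzU : z ∈ U := hGU hzG
    have hzV : z ∈ V := hzG.1.2
    intro i
    induction i with
    | zero =>
      intro _
      constructor
      · show h (α ((0 : ℕ) * (h z / c)) z) = h z
        rw [Nat.cast_zero, zero_mul, hα0]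
      · show Ψ^[0] z = α ((0 : ℕ) * (h z / c)) z
        rw [Function.iterate_zero_apply, Nat.cast_zero, zero_mul, hα0]
    | succ i ih =>
      intro hic
      have hic' : i ≤ c := Nat.le_of_succ_le hic
      obtain ⟨hhi, hiti⟩ := ih hic'
      -- first, the h-value identity at step i+1 needs h (q (i+1) z) = h z
      have hkey : ∀ j : ℕ, j ≤ c → h (q j z) = h z := by
        intro j hj
        obtain ⟨hqG, hqδ⟩ := hmemB z hz j hj
        have hqU : q j z ∈ U := hGU hqG
        have hb : α (h (q j z)) (q j z) = q j z := hper _ hqU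
        have hb' : α (h (q j z)) z = z := by
          set a : ℝ := (j : ℝ) * (h z / c) with hadef
          set b : ℝ := h (q j z) with hbdef
          have h1 : α b (α a z) = α a z := hb
          calc α b z = α (-a) (α a (α b z)) := (hcancel a _).symm
            _ = α (-a) (α (a + b) z) := by rw [hαadd]
            _ = α (-a) (α (b + a) z) := by rw [add_comm]
            _ = α (-a) (α b (α a z)) := by rw [hαadd b a]
            _ = α (-a) (α a z) := by rw [h1]
            _ = z := hcancel a z
        have hd : α (h (q j z) - h z) z = z := per_sub hα0 hαadd hb' (hper z hzU)
        by_contra hne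
        have hdne : h (q j z) - h z ≠ 0 := sub_ne_zero.2 hne
        have habs : α |h (q j z) - h z| z = z := by
          rcases abs_cases (h (q j z) - h z) with ⟨heq, _⟩ | ⟨heq, _⟩
          · rwa [heq]
          · rw [heq]; exact per_neg hα0 hαadd hd
        have hfixz : ∀ s, α s z = z :=
          hVkey z hzV _ (abs_pos.2 hdne) hqδ habs
        have : q j z = z := hfixz _
        rw [this] at hne
        exact hne rfl
      refine ⟨hkey (i + 1) hic, ?_⟩
      have harith : ((i + 1 : ℕ) : ℝ) * (h z / c) = h z / c + (i : ℝ) * (h z / c) := by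
        push_cast; ring
      calc Ψ^[i + 1] z = Ψ (Ψ^[i] z) := Function.iterate_succ_apply' Ψ i z
        _ = Ψ (q i z) := by rw [hiti]
        _ = α (h (q i z) / c) (q i z) := rfl
        _ = α (h z / c) (α ((i : ℝ) * (h z / c)) z) := by rw [hkey i hic']
        _ = α (h z / c + (i : ℝ) * (h z / c)) z := (hαadd _ _ z).symm
        _ = q (i + 1) z := by rw [← harith]
  have hΨc : ∀ z ∈ N₀, Ψ^[c] z = z := by
    intro z hz
    have h1 := (hstepA z hz c le_rfl).2
    rw [h1]
    show α ((c : ℝ) * (h z / c)) z = z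
    rw [mul_div_cancel₀ _ (ne_of_gt hc0)]
    exact hper z (hGU (hN₀G hz))
  -- smoothness of Ψ
  have hΨsmooth : ContMDiffOn I I (⊤ : ℕ∞) Ψ U := by
    have h1 : ContMDiffOn I (𝓘(ℝ, ℝ).prod I) (⊤ : ℕ∞) (fun z => ((h z / c, z) : ℝ × M)) U :=
      (hh.div_const _).prodMk contMDiffOn_id
    exact (hα.contMDiffOn).comp h1 (Set.subset_preimage_univ)
  -- the conjugated map in the chart
  set N₁ : Set M := (N₀ ∩ ψ.source) ∩ Ψ ⁻¹' ψ.source with hN₁def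
  have hN₁open : IsOpen N₁ :=
    (hΨcont.mono fun z hz => hGU (hN₀G hz.1)).isOpen_inter_preimage
      (hN₀open.inter hsrc_open) hsrc_open
  have hxN₁ : x ∈ N₁ := ⟨⟨hxN₀, hxsrc⟩, by show Ψ x ∈ ψ.source; rw [hxZrel]; exact hxsrc⟩
  have hN₁U : N₁ ⊆ U := fun z hz => hGU (hN₀G hz.1.1)
  set Ψh : E → E := fun w => ψ (Ψ (ψ.symm w)) with hΨhdef
  set Ω : Set E := ψ.target ∩ ψ.symm ⁻¹' N₁ with hΩdef
  have hΩopen : IsOpen Ω :=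
    (continuousOn_extChartAt_symm x).isOpen_inter_preimage htgt_open hN₁open
  have hxΩ : ψ x ∈ Ω := by
    refine ⟨hxtgt, ?_⟩
    show ψ.symm (ψ x) ∈ N₁
    rw [ψ.left_inv hxsrc]
    exact hxN₁
  have hΨhsmooth : ContDiffOn ℝ ((⊤ : ℕ∞) : WithTop ℕ∞) Ψh Ω := by
    have h1 : ContMDiffOn 𝓘(ℝ, E) I (⊤ : ℕ∞) (fun w => Ψ (ψ.symm w)) Ω := by
      apply (hΨsmooth.mono hN₁U).comp
        ((contMDiffOn_extChartAt_symm x).mono fun w hw => hw.1)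
      exact fun w hw => hw.2
    have h2 : ContMDiffOn 𝓘(ℝ, E) 𝓘(ℝ, E) (⊤ : ℕ∞) Ψh Ω := by
      apply (contMDiffOn_extChartAt (n := (⊤ : ℕ∞))).comp h1
      intro w hw
      show Ψ (ψ.symm w) ∈ (chartAt H x).source
      rw [← extChartAt_source (I := I)]
      exact hw.2.2
    exact_mod_cast h2.contDiffOn
  have hΨhx : Ψh (ψ x) = ψ x := by
    show ψ (Ψ (ψ.symm (ψ x))) = ψ x
    rw [ψ.left_inv hxsrc, hxZrel]
  -- the set where Ψh is the identity
  set Ω₂ : Set E := ψ.target ∩ ψ.symm ⁻¹' (N₁ ∩ interior Z) with hΩ₂def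
  have hΩ₂open : IsOpen Ω₂ :=
    (continuousOn_extChartAt_symm x).isOpen_inter_preimage htgt_open
      (hN₁open.inter isOpen_interior)
  have hΩ₂sub : Ω₂ ⊆ Ω := fun w hw => ⟨hw.1, hw.2.1⟩
  have hΩ₂id : ∀ w ∈ Ω₂, Ψh w = w := by
    intro w hw
    have h1 : Ψ (ψ.symm w) = ψ.symm w := (interior_subset hw.2.2).2
    show ψ (Ψ (ψ.symm w)) = w
    rw [h1, ψ.right_inv hw.1]
  -- x̂ is in the closure of Ω₂
  have hclΩ₂ : ψ x ∈ closure Ω₂ := by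
    have h1 : x ∈ closure (N₁ ∩ interior Z) := by
      rw [mem_closure_iff_nhds] at hcl ⊢
      intro W hW
      obtain ⟨y, hy1, hy2⟩ := hcl (W ∩ N₁) (Filter.inter_mem hW (hN₁open.mem_nhds hxN₁))
      exact ⟨y, hy1.1, hy1.2, hy2⟩
    have h2 : ψ x ∈ closure (ψ '' (N₁ ∩ interior Z)) := by
      apply ContinuousWithinAt.mem_closure_image _ h1
      exact ((continuousOn_extChartAt x) x hxsrc).mono fun z hz => hz.1.1.2
    refine closure_mono ?_ h2
    rintro w ⟨z, hz, rfl⟩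
    refine ⟨ψ.map_source hz.1.1.2, ?_⟩
    show ψ.symm (ψ z) ∈ N₁ ∩ interior Z
    rw [ψ.left_inv hz.1.1.2]
    exact hz
  -- the derivative of Ψh at x̂ is the identity
  have hDid : ∀ w ∈ Ω₂, fderiv ℝ Ψh w = ContinuousLinearMap.id ℝ E := by
    intro w hw
    have h1 : Ψh =ᶠ[𝓝 w] id := by
      filter_upwards [hΩ₂open.mem_nhds hw] with v hv
      exact hΩ₂id v hv
    rw [h1.fderiv_eq, fderiv_id]
  have hDcont : ContinuousOn (fderiv ℝ Ψh) Ω :=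
    hΨhsmooth.continuousOn_fderiv_of_isOpen hΩopen hcast1
  have hDx : fderiv ℝ Ψh (ψ x) = ContinuousLinearMap.id ℝ E := by
    have hneB : (𝓝[Ω₂] (ψ x)).NeBot := mem_closure_iff_nhdsWithin_neBot.1 hclΩ₂
    have h1 : Tendsto (fderiv ℝ Ψh) (𝓝[Ω₂] (ψ x)) (𝓝 (fderiv ℝ Ψh (ψ x))) :=
      ((hDcont (ψ x) hxΩ).mono hΩ₂sub)
    have h2 : Tendsto (fderiv ℝ Ψh) (𝓝[Ω₂] (ψ x)) (𝓝 (ContinuousLinearMap.id ℝ E)) := by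
      refine Tendsto.congr' ?_ tendsto_const_nhds
      filter_upwards [self_mem_nhdsWithin] with w hw
      exact (hDid w hw).symm
    exact tendsto_nhds_unique h1 h2
  have hΨhdiff : HasFDerivAt Ψh (ContinuousLinearMap.id ℝ E) (ψ x) := by
    have h1 : DifferentiableAt ℝ Ψh (ψ x) :=
      (hΨhsmooth.differentiableOn (by simp)).differentiableAt (hΩopen.mem_nhds hxΩ)
    have := h1.hasFDerivAt
    rwa [hDx] at this
  -- iterates of Ψh in the chart
  have hIter : ∀ i : ℕ, Ψh^[i] (ψ x) = ψ x ∧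
      HasFDerivAt (Ψh^[i]) (ContinuousLinearMap.id ℝ E) (ψ x) ∧
      ContDiffAt ℝ ((⊤ : ℕ∞) : WithTop ℕ∞) (Ψh^[i]) (ψ x) := by
    intro i
    induction i with
    | zero =>
      refine ⟨rfl, ?_, ?_⟩
      · simpa using hasFDerivAt_id (ψ x)
      · simpa using contDiffAt_id
    | succ i ih =>
      obtain ⟨ihval, ihder, ihsmooth⟩ := ih
      have hval : Ψh^[i + 1] (ψ x) = ψ x := by
        rw [Function.iterate_succ_apply', ihval, hΨhx]
      refine ⟨hval, ?_, ?_⟩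
      · have h1 : HasFDerivAt Ψh (ContinuousLinearMap.id ℝ E) (Ψh^[i] (ψ x)) := by
          rwa [ihval]
        have h2 := h1.comp (ψ x) ihder
        have h3 : (ContinuousLinearMap.id ℝ E).comp (ContinuousLinearMap.id ℝ E) =
            ContinuousLinearMap.id ℝ E := by ext v; rfl
        rw [Function.iterate_succ']
        rwa [h3] at h2
      · have h1 : ContDiffAt ℝ ((⊤ : ℕ∞) : WithTop ℕ∞) Ψh (Ψh^[i] (ψ x)) := by
          rw [ihval]
          exact hΨhsmooth.contDiffAt (hΩopen.mem_nhds hxΩ)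
        have h2 := h1.comp (ψ x) ihsmooth
        rwa [Function.iterate_succ']
  -- the averaged map
  set χ : E → E := fun w => (c : ℝ)⁻¹ • ∑ i ∈ Finset.range c, Ψh^[i] w with hχdef
  have hχsmooth : ContDiffAt ℝ ((⊤ : ℕ∞) : WithTop ℕ∞) χ (ψ x) := by
    apply ContDiffAt.const_smul
    exact ContDiffAt.sum fun i _ => (hIter i).2.2
  have hχderiv : HasFDerivAt χ (ContinuousLinearMap.id ℝ E) (ψ x) := by
    have h1 : HasFDerivAt (fun w => ∑ i ∈ Finset.range c, Ψh^[i] w)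
        (∑ i ∈ Finset.range c, ContinuousLinearMap.id ℝ E) (ψ x) :=
      HasFDerivAt.fun_sum fun i _ => (hIter i).2.1
    have h2 := h1.const_smul ((c : ℝ)⁻¹)
    have h3 : (c : ℝ)⁻¹ • (∑ _i ∈ Finset.range c, ContinuousLinearMap.id ℝ E) =
        ContinuousLinearMap.id ℝ E := by
      ext v
      simp only [ContinuousLinearMap.smul_apply, ContinuousLinearMap.coe_sum',
        Finset.sum_apply, ContinuousLinearMap.id_apply, Finset.sum_const,
        Finset.card_range]
      rw [← Nat.cast_smul_eq_nsmul ℝ, smul_smul, inv_mul_cancel₀ (ne_of_gt hc0), one_smul]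
    rwa [h3] at h2
  have hχstrict : HasStrictFDerivAt χ
      ((ContinuousLinearEquiv.refl ℝ E : E ≃L[ℝ] E) : E →L[ℝ] E) (ψ x) := by
    have h1 := hχsmooth.hasStrictFDerivAt (by simp)
    have h2 : fderiv ℝ χ (ψ x) = ContinuousLinearMap.id ℝ E := hχderiv.fderiv
    rw [h2] at h1
    exact h1
  set Hloc := hχstrict.toOpenPartialHomeomorph χ with hHdef
  have hxHsrc : ψ x ∈ Hloc.source := hχstrict.mem_toOpenPartialHomeomorph_source
  have hHcoe : ∀ w, Hloc w = χ w := by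
    intro w
    rw [hHdef, hχstrict.toOpenPartialHomeomorph_coe]
  -- χ is injective near x̂ and χ ∘ Ψh = χ near x̂, hence Ψh = id near x̂
  -- the conjugation identity for iterates
  have hconj : ∀ w ∈ Ω, ∀ i : ℕ, i ≤ c → Ψh^[i] w = ψ (Ψ^[i] (ψ.symm w)) := by
    intro w hw i hic
    induction i with
    | zero =>
      simp only [Function.iterate_zero_apply]
      rw [ψ.right_inv hw.1]
    | succ i ih =>
      have hic' : i ≤ c := Nat.le_of_succ_le hic
      have hzN₀ : ψ.symm w ∈ N₀ := hw.2.1.1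
      have h1 : Ψ^[i] (ψ.symm w) = q i (ψ.symm w) := (hstepA _ hzN₀ i hic').2
      have hqiG : q i (ψ.symm w) ∈ G := (hmemB _ hzN₀ i hic').1
      have hqisrc : Ψ^[i] (ψ.symm w) ∈ ψ.source := by rw [h1]; exact hqiG.2
      rw [Function.iterate_succ_apply', ih hic', Function.iterate_succ_apply']
      show ψ (Ψ (ψ.symm (ψ (Ψ^[i] (ψ.symm w))))) = ψ (Ψ (Ψ^[i] (ψ.symm w)))
      rw [ψ.left_inv hqisrc]
  have hΨhc : ∀ w ∈ Ω, Ψh^[c] w = w := by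
    intro w hw
    rw [hconj w hw c le_rfl, hΨc _ hw.2.1.1, ψ.right_inv hw.1]
  have hχΨ : ∀ w ∈ Ω ∩ Ψh ⁻¹' Ω, χ (Ψh w) = χ w := by
    intro w hw
    have h1 : ∀ i ∈ Finset.range c, Ψh^[i] (Ψh w) = Ψh^[i + 1] w := by
      intro i _
      rw [Function.iterate_succ_apply]
    have h2 : ∑ i ∈ Finset.range c, Ψh^[i] (Ψh w) = ∑ i ∈ Finset.range c, Ψh^[i + 1] w :=
      Finset.sum_congr rfl h1
    have h3 : ∑ i ∈ Finset.range (c + 1), Ψh^[i] w =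
        (∑ i ∈ Finset.range c, Ψh^[i] w) + Ψh^[c] w := Finset.sum_range_succ _ c
    have h4 : ∑ i ∈ Finset.range (c + 1), Ψh^[i] w =
        (∑ i ∈ Finset.range c, Ψh^[i + 1] w) + Ψh^[0] w := Finset.sum_range_succ' _ c
    have h5 : Ψh^[c] w = w := hΨhc w hw.1
    have h6 : Ψh^[0] w = w := rfl
    show (c : ℝ)⁻¹ • ∑ i ∈ Finset.range c, Ψh^[i] (Ψh w) =
      (c : ℝ)⁻¹ • ∑ i ∈ Finset.range c, Ψh^[i] w
    rw [h2]
    congr 1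
    have h7 : (∑ i ∈ Finset.range c, Ψh^[i + 1] w) + Ψh^[0] w =
        (∑ i ∈ Finset.range c, Ψh^[i] w) + Ψh^[c] w := by rw [← h4, h3]
    rw [h5, h6] at h7
    exact add_right_cancel h7
  -- final neighbourhood
  set Nh : Set E := (Ω ∩ Ψh ⁻¹' Ω) ∩ (Hloc.source ∩ Ψh ⁻¹' Hloc.source) with hNhdef
  have hΨhcontΩ : ContinuousOn Ψh Ω := hΨhsmooth.continuousOn
  have hNhopen : IsOpen Nh := by
    have h1 : IsOpen (Ω ∩ Ψh ⁻¹' Ω) := hΨhcontΩ.isOpen_inter_preimage hΩopen hΩopen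
    have h2 : IsOpen ((Ω ∩ Ψh ⁻¹' Ω) ∩ Ψh ⁻¹' Hloc.source) :=
      (hΨhcontΩ.mono inter_subset_left).isOpen_inter_preimage h1 Hloc.open_source
    have h3 : Nh = ((Ω ∩ Ψh ⁻¹' Ω) ∩ Ψh ⁻¹' Hloc.source) ∩ Hloc.source := by
      rw [hNhdef]; ext w; constructor
      · rintro ⟨ha, hb, hc'⟩; exact ⟨⟨ha, hc'⟩, hb⟩
      · rintro ⟨⟨ha, hc'⟩, hb⟩; exact ⟨ha, hb, hc'⟩
    rw [h3]
    exact h2.inter Hloc.open_source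
  have hxNh : ψ x ∈ Nh := by
    refine ⟨⟨hxΩ, ?_⟩, hxHsrc, ?_⟩
    · show Ψh (ψ x) ∈ Ω; rw [hΨhx]; exact hxΩ
    · show Ψh (ψ x) ∈ Hloc.source; rw [hΨhx]; exact hxHsrc
  have hΨhid : ∀ w ∈ Nh, Ψh w = w := by
    intro w hw
    apply Hloc.injOn hw.2.2 hw.2.1
    rw [hHcoe, hHcoe]
    exact hχΨ w hw.1
  -- pull everything back to the manifold
  refine ⟨ψ.source ∩ ψ ⁻¹' Nh, ?_, ⟨hxsrc, hxNh⟩, ?_⟩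
  · exact (continuousOn_extChartAt x).isOpen_inter_preimage hsrc_open hNhopen
  intro z hz
  have hw : ψ z ∈ Nh := hz.2
  have h1 : Ψh (ψ z) = ψ z := hΨhid _ hw
  have h2 : ψ.symm (ψ z) = z := ψ.left_inv hz.1
  have h3 : ψ (Ψ z) = ψ z := by
    have := h1
    rw [hΨhdef] at this
    simp only at this
    rwa [h2] at this
  have hzN₁ : z ∈ N₁ := by
    have h5 := hw.1.1.2
    simp only [mem_preimage] at h5
    rwa [h2] at h5
  have h4 : Ψ z ∈ ψ.source := hzN₁.2
  exact ψ.injOn h4 hz.1 h3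

end Aux

/-- Let `α` be a smooth action of `ℝ` on a smooth manifold `M`, `W` the interior of its
fixed-point set and `Per(α)` its set of stably periodic points.  For
`x ∈ Per(α) \ W` let `p x` be the infimum of the set of `t > 0` for which there exist an
open neighbourhood `U` of `x` and a smooth function `f : U → ℝ` with `f x = t` and
`α (f y) y = y` for all `y ∈ U`.  Then `p` is positive on `Per(α) \ W` and smooth on the
open set `Per(α) \ W`. -/
theorem stablyPeriodic_period_pos_and_smooth
    {E : Type*} [NormedAddCommGroup E] [NormedSpace ℝ E] [FiniteDimensional ℝ E]
    {H : Type*} [TopologicalSpace H] {I : ModelWithCorners ℝ E H} [I.Boundaryless]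
    {M : Type*} [TopologicalSpace M] [ChartedSpace H M] [IsManifold I (⊤ : ℕ∞) M]
    [T2Space M] [SecondCountableTopology M]
    (α : ℝ → M → M)
    (hα : ContMDiff (𝓘(ℝ, ℝ).prod I) I (⊤ : ℕ∞) fun p : ℝ × M ↦ α p.1 p.2)
    (hα0 : ∀ x, α 0 x = x)
    (hαadd : ∀ s t x, α (s + t) x = α s (α t x))
    (p : M → ℝ)
    (hp : ∀ x, p x = sInf {t : ℝ | 0 < t ∧ ∃ U : Set M, IsOpen U ∧ x ∈ U ∧
        ∃ f : M → ℝ, ContMDiffOn I 𝓘(ℝ, ℝ) (⊤ : ℕ∞) f U ∧ f x = t ∧ ∀ y ∈ U, α (f y) y = y}) :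
    (∀ x ∈ ({x | ∃ U : Set M, IsOpen U ∧ x ∈ U ∧ ∃ f : M → ℝ,
          ContMDiffOn I 𝓘(ℝ, ℝ) (⊤ : ℕ∞) f U ∧ (∀ y ∈ U, f y ≠ 0) ∧ ∀ y ∈ U, α (f y) y = y} \
        interior {x | ∀ t, α t x = x}), 0 < p x) ∧
      ContMDiffOn I 𝓘(ℝ, ℝ) (⊤ : ℕ∞) p
        ({x | ∃ U : Set M, IsOpen U ∧ x ∈ U ∧ ∃ f : M → ℝ,
          ContMDiffOn I 𝓘(ℝ, ℝ) (⊤ : ℕ∞) f U ∧ (∀ y ∈ U, f y ≠ 0) ∧ ∀ y ∈ U, α (f y) y = y} \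
        interior {x | ∀ t, α t x = x}) := by
  classical
  -- the main local statement: near every stably periodic non-interior-fixed point,
  -- `p` agrees with a smooth positive period function
  have main : ∀ x ∈ ({x | ∃ U : Set M, IsOpen U ∧ x ∈ U ∧ ∃ f : M → ℝ,
        ContMDiffOn I 𝓘(ℝ, ℝ) (⊤ : ℕ∞) f U ∧ (∀ y ∈ U, f y ≠ 0) ∧ ∀ y ∈ U, α (f y) y = y} \
      interior {x | ∀ t, α t x = x}),
      ∃ U' : Set M, IsOpen U' ∧ x ∈ U' ∧ ∃ h0 : M → ℝ,
        ContMDiffOn I 𝓘(ℝ, ℝ) (⊤ : ℕ∞) h0 U' ∧ h0 x = p x ∧ 0 < p x ∧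
        ∀ y ∈ U' ∩ ({x | ∃ U : Set M, IsOpen U ∧ x ∈ U ∧ ∃ f : M → ℝ,
          ContMDiffOn I 𝓘(ℝ, ℝ) (⊤ : ℕ∞) f U ∧ (∀ y ∈ U, f y ≠ 0) ∧ ∀ y ∈ U, α (f y) y = y} \
          interior {x | ∀ t, α t x = x}), p y = h0 y := by
    intro x hxS
    obtain ⟨hxPer, hxW⟩ := hxS
    obtain ⟨δ, hδpos, V, hVopen, hxV, hVkey⟩ := key_small_period hα hα0 hαadd x
    -- `PV y` : the set of values of local smooth period functions at `y`
    set PV : M → Set ℝ := fun y => {t : ℝ | 0 < t ∧ ∃ U : Set M, IsOpen U ∧ y ∈ U ∧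
        ∃ f : M → ℝ, ContMDiffOn I 𝓘(ℝ, ℝ) (⊤ : ℕ∞) f U ∧ f y = t ∧ ∀ z ∈ U, α (f z) z = z}
      with hPVdef
    have hpPV : ∀ y, p y = sInf (PV y) := hp
    have hbdd : ∀ y, BddBelow (PV y) := fun y => ⟨0, fun t ht => ht.1.le⟩
    -- nonemptiness of `PV y` for stably periodic `y`
    have hPVne : ∀ y ∈ ({x | ∃ U : Set M, IsOpen U ∧ x ∈ U ∧ ∃ f : M → ℝ,
        ContMDiffOn I 𝓘(ℝ, ℝ) (⊤ : ℕ∞) f U ∧ (∀ y ∈ U, f y ≠ 0) ∧ ∀ y ∈ U, α (f y) y = y}),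
        (PV y).Nonempty := by
      intro y hy
      obtain ⟨Uf, hUfopen, hyUf, f, hfsmooth, hfne, hfper⟩ := hy
      rcases lt_or_gt_of_ne (hfne y hyUf) with hneg | hpos
      · exact ⟨-f y, ⟨by linarith, Uf, hUfopen, hyUf, -f, hfsmooth.neg, rfl,
          fun z hz => per_neg hα0 hαadd (hfper z hz)⟩⟩
      · exact ⟨f y, ⟨hpos, Uf, hUfopen, hyUf, f, hfsmooth, rfl, hfper⟩⟩
    -- lower bound for period values near `x`
    have hlow : ∀ y ∈ V, y ∉ interior {x | ∀ t, α t x = x} → ∀ t ∈ PV y, δ ≤ t := by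
      intro y hyV hyW t ht
      obtain ⟨htpos, U', hU'open, hyU', g, hgsmooth, hgval, hgper⟩ := ht
      by_contra hlt
      push_neg at hlt
      set O : Set M := (U' ∩ V) ∩ g ⁻¹' Ioo 0 δ with hOdef
      have hOopen : IsOpen O :=
        (hgsmooth.continuousOn.mono inter_subset_left).isOpen_inter_preimage
          (hU'open.inter hVopen) isOpen_Ioo
      have hyO : y ∈ O := ⟨⟨hyU', hyV⟩, by rw [mem_preimage, hgval]; exact ⟨htpos, hlt⟩⟩
      have hnsub : ¬ O ⊆ {x | ∀ t, α t x = x} := by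
        intro hsub
        exact hyW (mem_interior.2 ⟨O, hsub, hOopen, hyO⟩)
      obtain ⟨z, hzO, hzFix⟩ := not_subset.1 hnsub
      exact hzFix (hVkey z hzO.1.2 (g z) hzO.2.1 hzO.2.2 (hgper z hzO.1.1))
    -- the infimum is attained and positive
    have hattain : ∀ y ∈ V, y ∉ interior {x | ∀ t, α t x = x} → (PV y).Nonempty →
        (sInf (PV y) ∈ PV y ∧ δ ≤ sInf (PV y)) := by
      intro y hyV hyW hne
      have hlb : ∀ t ∈ PV y, δ ≤ t := hlow y hyV hyW
      have h1 : δ ≤ sInf (PV y) := le_csInf hne hlb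
      obtain ⟨a, haPV, halt⟩ := exists_lt_of_csInf_lt hne
        (lt_add_of_pos_right (sInf (PV y)) hδpos)
      have hamin : ∀ b ∈ PV y, a ≤ b := by
        intro b hb
        by_contra hab
        push_neg at hab
        have hdiff : a - b ∈ PV y := by
          obtain ⟨hapos, Ua, hUaopen, hyUa, fa, hfa, hfaval, hfaper⟩ := haPV
          obtain ⟨hbpos, Ub, hUbopen, hyUb, fb, hfb, hfbval, hfbper⟩ := hb
          refine ⟨by linarith, Ua ∩ Ub, hUaopen.inter hUbopen, ⟨hyUa, hyUb⟩,
            fa - fb, (hfa.mono inter_subset_left).sub (hfb.mono inter_subset_right), ?_, ?_⟩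
          · show fa y - fb y = a - b
            rw [hfaval, hfbval]
          · intro z hz
            exact per_sub hα0 hαadd (hfaper z hz.1) (hfbper z hz.2)
        have h2 : δ ≤ a - b := hlb _ hdiff
        have h3 : sInf (PV y) ≤ b := csInf_le (hbdd y) hb
        linarith
      have h4 : a ≤ sInf (PV y) := le_csInf hne hamin
      have h5 : a = sInf (PV y) := le_antisymm h4 (csInf_le (hbdd y) haPV)
      rw [← h5]
      exact ⟨haPV, by linarith⟩
    -- the smooth minimal period function `h0` at `x`
    obtain ⟨hinfmem, hinflb⟩ := hattain x hxV hxW (hPVne x hxPer)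
    have hppos : 0 < p x := by rw [hpPV x]; linarith
    obtain ⟨hinfpos, Uh, hUhopen, hxUh, h0, hh0, hh0val, hh0per⟩ := hinfmem
    have hh0x : h0 x = p x := by rw [hh0val, hpPV x]
    -- shrink the domain of `h0`
    set Uh' : Set M := (Uh ∩ V) ∩ h0 ⁻¹' Ioo (p x - min δ 1 / 2) (p x + min δ 1 / 2)
      with hUh'def
    have hUh'open : IsOpen Uh' :=
      (hh0.continuousOn.mono inter_subset_left).isOpen_inter_preimage
        (hUhopen.inter hVopen) isOpen_Ioo
    have hxUh' : x ∈ Uh' := by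
      refine ⟨⟨hxUh, hxV⟩, ?_⟩
      rw [mem_preimage, hh0x]
      constructor <;> [skip; skip] <;>
        · have h1 : 0 < min δ 1 := lt_min hδpos one_pos
          linarith
    have hUh'V : Uh' ⊆ V := fun z hz => hz.1.2
    have hUh'Uh : Uh' ⊆ Uh := fun z hz => hz.1.1
    have hh0' : ContMDiffOn I 𝓘(ℝ, ℝ) (⊤ : ℕ∞) h0 Uh' := hh0.mono hUh'Uh
    have hh0'per : ∀ z ∈ Uh', α (h0 z) z = z := fun z hz => hh0per z (hUh'Uh hz)
    have hh0pos : ∀ z ∈ Uh', 0 < h0 z ∧ h0 z < p x + 1 := by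
      intro z hz
      have h1 := hz.2
      rw [mem_preimage, mem_Ioo] at h1
      have h2 : 0 < min δ 1 := lt_min hδpos one_pos
      have h3 : min δ 1 ≤ δ := min_le_left _ _
      have h4 : min δ 1 ≤ 1 := min_le_right _ _
      constructor
      · have : δ ≤ p x := by rw [hpPV x]; exact hinflb
        linarith
      · linarith
    -- the exceptional multiplicities
    set C₀ : ℕ := ⌈(p x + 1) / δ⌉₊ with hC₀def
    set Zc : ℕ → Set M := fun c => {z | z ∈ Uh' ∩ V ∧ α (h0 z / c) z = z} with hZcdef
    have hbadc : ∀ c : ℕ, 2 ≤ c → x ∉ closure (interior (Zc c)) := by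
      intro c hc hcl
      obtain ⟨N, hNopen, hxN, hNper⟩ := bochner_rigidity hα hα0 hαadd hδpos hVopen hVkey
        hUh'open hh0' hh0'per hxUh' hxV hc hcl
      have hc0 : (0 : ℝ) < (c : ℝ) := by exact_mod_cast Nat.lt_of_lt_of_le Nat.zero_lt_two hc
      have hmem : h0 x / c ∈ PV x := by
        refine ⟨by rw [hh0x]; positivity, N ∩ Uh', hNopen.inter hUh'open, ⟨hxN, hxUh'⟩,
          fun z => h0 z / c, (hh0'.mono inter_subset_right).div_const _, rfl, ?_⟩
        intro z hz
        exact hNper z hz.1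
      have h1 : p x ≤ h0 x / c := by
        rw [hpPV x]
        exact csInf_le (hbdd x) hmem
      rw [hh0x] at h1
      have hc0' : (2 : ℝ) ≤ (c : ℝ) := by exact_mod_cast hc
      have h2 : p x / (c : ℝ) ≤ p x / 2 := by
        rw [div_le_div_iff₀ hc0 (by norm_num : (0:ℝ) < 2)]
        nlinarith
      linarith
    -- the good neighbourhood of `x`
    set Vstar : Set M := Uh' \ ⋃ c ∈ Finset.Icc 2 C₀, closure (interior (Zc c))
      with hVstardef
    have hVstaropen : IsOpen Vstar := by
      apply hUh'open.sdiff
      apply Set.Finite.isClosed_biUnion (Finset.finite_toSet _)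
      exact fun c _ => isClosed_closure
    have hxVstar : x ∈ Vstar := by
      refine ⟨hxUh', ?_⟩
      intro hxbad
      obtain ⟨c, hc1, hc2⟩ := Set.mem_iUnion₂.1 hxbad
      exact hbadc c (Finset.mem_Icc.1 hc1).1 hc2
    refine ⟨Vstar, hVstaropen, hxVstar, h0, hh0.mono fun z hz => hUh'Uh hz.1, hh0x, hppos, ?_⟩
    -- on `Vstar ∩ S`, `p` agrees with `h0`
    intro y hy
    obtain ⟨hyVstar, hyPer, hyW⟩ := hy
    have hyUh' : y ∈ Uh' := hyVstar.1
    have hyV : y ∈ V := hUh'V hyUh'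
    obtain ⟨hyinfmem, hyinflb⟩ := hattain y hyV hyW (hPVne y hyPer)
    have hypy : 0 < p y := by rw [hpPV y]; linarith
    have hh0mem : h0 y ∈ PV y :=
      ⟨(hh0pos y hyUh').1, Uh', hUh'open, hyUh', h0, hh0', rfl, hh0'per⟩
    have hle : p y ≤ h0 y := by
      rw [hpPV y]
      exact csInf_le (hbdd y) hh0mem
    rcases eq_or_lt_of_le hle with heq | hlt
    · exact heq
    -- otherwise, `h0 y` is a proper multiple of `p y`, contradiction with `Vstar`
    exfalso
    obtain ⟨hyinfpos, Ug, hUgopen, hyUg, g, hgsmooth, hgval, hgper⟩ := hyinfmem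
    have hgvalp : g y = p y := by rw [hgval, hpPV y]
    set P : ℕ → Prop := fun m => 0 < h0 y - m * p y with hPdef
    have hP0 : P 0 := by
      show 0 < h0 y - (0 : ℕ) * p y
      push_cast
      have := (hh0pos y hyUh').1
      linarith
    have hdel : δ ≤ p y := by rw [hpPV y]; exact hyinflb
    have hC₀ge : (p x + 1) / δ ≤ (C₀ : ℝ) := Nat.le_ceil _
    have hPle : ∀ m : ℕ, P m → m < C₀ := by
      intro m hm
      show m < C₀
      have h1 : (m : ℝ) * p y < h0 y := by
        have h1' : 0 < h0 y - (m : ℝ) * p y := hm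
        linarith
      have h2 : (m : ℝ) * δ ≤ (m : ℝ) * p y :=
        mul_le_mul_of_nonneg_left hdel (Nat.cast_nonneg m)
      have h3 : h0 y < p x + 1 := (hh0pos y hyUh').2
      have h4 : (m : ℝ) * δ < p x + 1 := by linarith
      have h5 : (m : ℝ) < (p x + 1) / δ := by
        rw [lt_div_iff₀ hδpos]
        linarith
      have h6 : (m : ℝ) < (C₀ : ℝ) := lt_of_lt_of_le h5 hC₀ge
      exact_mod_cast h6
    set m : ℕ := Nat.findGreatest P C₀ with hmdef
    have hPm : P m := Nat.findGreatest_spec (Nat.zero_le C₀) hP0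
    have hmlt : m < C₀ := hPle m hPm
    have hnotPm1 : ¬ P (m + 1) := by
      apply Nat.findGreatest_is_greatest
      · exact Nat.lt_succ_of_le le_rfl
      · exact hmlt
    set c : ℕ := m + 1 with hcdef
    have hs_mem : h0 y - (m : ℝ) * p y ∈ PV y := by
      refine ⟨hPm, Uh' ∩ Ug, hUh'open.inter hUgopen, ⟨hyUh', hyUg⟩,
        fun z => h0 z - m * g z,
        ((hh0'.mono inter_subset_left).sub
          ((contMDiffOn_const.mul (hgsmooth.mono inter_subset_right)))), ?_, ?_⟩
      · show h0 y - (m : ℝ) * g y = h0 y - (m : ℝ) * p y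
        rw [hgvalp]
      · intro z hz
        have h1 : α (h0 z) z = z := hh0'per z hz.1
        have h2 : α ((m : ℝ) * g z) z = z := per_nsmul hα0 hαadd (hgper z hz.2) m
        exact per_sub hα0 hαadd h1 h2
    have hs_ge : p y ≤ h0 y - (m : ℝ) * p y := by
      have h1 := csInf_le (hbdd y) hs_mem
      rwa [← hpPV y] at h1
    have hs_le : h0 y - (m : ℝ) * p y ≤ p y := by
      have h1 : ¬ (0 < h0 y - ((m + 1 : ℕ) : ℝ) * p y) := hnotPm1
      push_neg at h1
      push_cast at h1
      linarith
    have hceq : h0 y = (c : ℝ) * p y := by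
      have := le_antisymm hs_le hs_ge
      rw [hcdef]
      push_cast
      linarith
    have hc2 : 2 ≤ c := by
      by_contra hc1
      push_neg at hc1
      have hc1' : c = 1 := by omega
      rw [hc1'] at hceq
      norm_num at hceq
      linarith
    have hcC₀ : c ≤ C₀ := hmlt
    -- `y` lies in the interior of `Zc c`
    have hyint : y ∈ interior (Zc c) := by
      have hc0 : (0 : ℝ) < (c : ℝ) := by positivity
      set Oy : Set M := (Uh' ∩ Ug) ∩ (fun z => h0 z - c * g z) ⁻¹' Metric.ball 0 δ
        with hOydef
      have hOyopen : IsOpen Oy := by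
        have hcont : ContinuousOn (fun z => h0 z - c * g z) (Uh' ∩ Ug) :=
          ((hh0'.continuousOn.mono inter_subset_left).sub
            (continuousOn_const.mul (hgsmooth.continuousOn.mono inter_subset_right)))
        exact hcont.isOpen_inter_preimage (hUh'open.inter hUgopen) Metric.isOpen_ball
      have hyOy : y ∈ Oy := by
        refine ⟨⟨hyUh', hyUg⟩, ?_⟩
        show (fun z => h0 z - c * g z) y ∈ Metric.ball 0 δ
        simp only [hgvalp, hceq]
        simp [Metric.mem_ball, hδpos]
      have hOyZ : Oy ⊆ Zc c := by
        intro z hz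
        have hzUh' : z ∈ Uh' := hz.1.1
        refine ⟨⟨hzUh', hUh'V hzUh'⟩, ?_⟩
        have he : α (h0 z - (c : ℝ) * g z) z = z := by
          have h1 : α (h0 z) z = z := hh0'per z hzUh'
          have h2 : α ((c : ℝ) * g z) z = z := per_nsmul hα0 hαadd (hgper z hz.1.2) c
          exact per_sub hα0 hαadd h1 h2
        have habs : |h0 z - (c : ℝ) * g z| < δ := by
          have := hz.2
          simp only [mem_preimage, Metric.mem_ball, Real.dist_eq, sub_zero] at this
          exact this
        by_cases he0 : h0 z - (c : ℝ) * g z = 0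
        · have h3 : h0 z / c = g z := by
            field_simp at he0 ⊢
            linarith
          rw [h3]
          exact hgper z hz.1.2
        · have h4 : α |h0 z - (c : ℝ) * g z| z = z := by
            rcases abs_cases (h0 z - (c : ℝ) * g z) with ⟨hh, _⟩ | ⟨hh, _⟩
            · rwa [hh]
            · rw [hh]; exact per_neg hα0 hαadd he
          have hfix := hVkey z (hUh'V hzUh') _ (abs_pos.2 he0) habs h4
          exact hfix _
      exact mem_interior.2 ⟨Oy, hOyZ, hOyopen, hyOy⟩
    have : y ∈ ⋃ c ∈ Finset.Icc 2 C₀, closure (interior (Zc c)) := by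
      apply Set.mem_iUnion₂.2
      exact ⟨c, Finset.mem_Icc.2 ⟨hc2, hcC₀⟩, subset_closure hyint⟩
    exact hyVstar.2 this
  constructor
  · intro x hxS
    obtain ⟨U', _, _, h0, _, _, hppos, _⟩ := main x hxS
    exact hppos
  · intro x hxS
    obtain ⟨U', hU'open, hxU', h0, hh0, hh0x, hppos, hagree⟩ := main x hxS
    refine ContMDiffWithinAt.congr_of_eventuallyEq
      ((hh0.contMDiffAt (hU'open.mem_nhds hxU')).contMDiffWithinAt) ?_ hh0x.symm
    filter_upwards [mem_nhdsWithin_of_mem_nhds (hU'open.mem_nhds hxU'),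
      self_mem_nhdsWithin] with y h1 h2
    exact hagree y ⟨h1, h2⟩
end

section
/- Let X : ℝⁿ → ℝⁿ be a smooth compactly supported map (a vector field on ℝⁿ) all of whose derivatives vanish at a point x₀ ∈ ℝⁿ. Then there exist a smooth function q : ℝⁿ → ℝ with q(x) ≥ 0 for all x and q(x₀) = 0, and a smooth compactly supported map Y : ℝⁿ → ℝⁿ, such that X(x) = q(x) · Y(x) for all x ∈ ℝⁿ. -/
open Metric Set Asymptotics Filter
open scoped ContDiff

namespace FlatFactor


variable {D : Type} [NormedAddCommGroup D] [InnerProductSpace ℝ D] [ProperSpace D] (x₀ : D)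

/-- Flatness at `x₀` with all-order polynomial bounds on the closed unit ball. -/
def IsFlat (x₀ : D) {E : Type} [NormedAddCommGroup E] [NormedSpace ℝ E] (f : D → E) : Prop :=
  ContDiff ℝ (⊤ : ℕ∞) f ∧
    ∀ k N : ℕ, ∃ C : ℝ, ∀ x ∈ closedBall x₀ 1, ‖iteratedFDeriv ℝ k f x‖ ≤ C * ‖x - x₀‖ ^ N

theorem norm_sub_le_of_mem_segment {x y : D} (hy : y ∈ segment ℝ x₀ x) :
    ‖y - x₀‖ ≤ ‖x - x₀‖ := by
  obtain ⟨a, b, ha, hb, hab, rfl⟩ := hy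
  have h1 : a • x₀ + b • x - x₀ = b • (x - x₀) := by
    have : a = 1 - b := by linarith
    subst this
    rw [sub_smul, one_smul, smul_sub]
    abel
  rw [h1, norm_smul, Real.norm_eq_abs, abs_of_nonneg hb]
  exact mul_le_of_le_one_left (norm_nonneg _) (by linarith)

theorem bound_of_flat (N : ℕ) :
    ∀ {E : Type} [NormedAddCommGroup E] [NormedSpace ℝ E] (f : D → E),
      ContDiff ℝ (⊤ : ℕ∞) f → (∀ k, iteratedFDeriv ℝ k f x₀ = 0) →
      ∃ C : ℝ, ∀ x ∈ closedBall x₀ 1, ‖f x‖ ≤ C * ‖x - x₀‖ ^ N := by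
  induction N with
  | zero =>
    intro E _ _ f hf _
    obtain ⟨C, hC⟩ := (isCompact_closedBall x₀ 1).exists_bound_of_continuousOn
      hf.continuous.continuousOn
    exact ⟨C, fun x hx => by simpa using hC x hx⟩
  | succ N ih =>
    intro E _ _ f hf hz
    have hf' : ContDiff ℝ (⊤ : ℕ∞) (fderiv ℝ f) :=
      hf.fderiv_right (by exact_mod_cast le_top)
    have hz' : ∀ k, iteratedFDeriv ℝ k (fderiv ℝ f) x₀ = 0 := by
      intro k
      rw [← norm_eq_zero, norm_iteratedFDeriv_fderiv, hz (k + 1), norm_zero]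
    obtain ⟨C, hC⟩ := ih (fderiv ℝ f) hf' hz'
    refine ⟨max C 0, fun x hx => ?_⟩
    have hfx0 : f x₀ = 0 := norm_eq_zero.mp
      (by rw [← norm_iteratedFDeriv_zero (𝕜 := ℝ) (f := f) (x := x₀), hz 0, norm_zero])
    have hseg : segment ℝ x₀ x ⊆ closedBall x₀ 1 :=
      (convex_closedBall x₀ 1).segment_subset (mem_closedBall_self zero_le_one) hx
    have hbound : ∀ y ∈ segment ℝ x₀ x, ‖fderiv ℝ f y‖ ≤ max C 0 * ‖x - x₀‖ ^ N := by
      intro y hy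
      calc ‖fderiv ℝ f y‖ ≤ C * ‖y - x₀‖ ^ N := hC y (hseg hy)
        _ ≤ max C 0 * ‖y - x₀‖ ^ N :=
          mul_le_mul_of_nonneg_right (le_max_left _ _) (by positivity)
        _ ≤ max C 0 * ‖x - x₀‖ ^ N := by
          apply mul_le_mul_of_nonneg_left _ (le_max_right _ _)
          exact pow_le_pow_left₀ (norm_nonneg _) (norm_sub_le_of_mem_segment x₀ hy) N
    have := (convex_segment x₀ x).norm_image_sub_le_of_norm_fderiv_le
      (f := f) (C := max C 0 * ‖x - x₀‖ ^ N)
      (fun y _ => (hf.differentiable (by simp)).differentiableAt)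
      hbound (left_mem_segment ℝ x₀ x) (right_mem_segment ℝ x₀ x)
    rw [hfx0, sub_zero] at this
    calc ‖f x‖ ≤ max C 0 * ‖x - x₀‖ ^ N * ‖x - x₀‖ := this
      _ = max C 0 * ‖x - x₀‖ ^ (N + 1) := by ring

theorem iFD_bound_of_flat (k : ℕ) :
    ∀ {E : Type} [NormedAddCommGroup E] [NormedSpace ℝ E] (f : D → E),
      ContDiff ℝ (⊤ : ℕ∞) f → (∀ j, iteratedFDeriv ℝ j f x₀ = 0) → ∀ N : ℕ,
      ∃ C : ℝ, ∀ x ∈ closedBall x₀ 1, ‖iteratedFDeriv ℝ k f x‖ ≤ C * ‖x - x₀‖ ^ N := by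
  induction k with
  | zero =>
    intro E _ _ f hf hz N
    obtain ⟨C, hC⟩ := bound_of_flat x₀ N f hf hz
    exact ⟨C, fun x hx => by rw [norm_iteratedFDeriv_zero]; exact hC x hx⟩
  | succ k ih =>
    intro E _ _ f hf hz N
    have hf' : ContDiff ℝ (⊤ : ℕ∞) (fderiv ℝ f) :=
      hf.fderiv_right (by exact_mod_cast le_top)
    have hz' : ∀ j, iteratedFDeriv ℝ j (fderiv ℝ f) x₀ = 0 := by
      intro j
      rw [← norm_eq_zero, norm_iteratedFDeriv_fderiv, hz (j + 1), norm_zero]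
    obtain ⟨C, hC⟩ := ih (fderiv ℝ f) hf' hz' N
    exact ⟨C, fun x hx => by rw [← norm_iteratedFDeriv_fderiv]; exact hC x hx⟩

theorem IsFlat.fderiv {E : Type} [NormedAddCommGroup E] [NormedSpace ℝ E] {f : D → E}
    (hf : IsFlat x₀ f) : IsFlat x₀ (fderiv ℝ f) := by
  refine ⟨hf.1.fderiv_right (by exact_mod_cast le_top), fun k N => ?_⟩
  obtain ⟨C, hC⟩ := hf.2 (k + 1) N
  exact ⟨C, fun x hx => by rw [norm_iteratedFDeriv_fderiv]; exact hC x hx⟩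

theorem IsFlat.bilin {E F G : Type} [NormedAddCommGroup E] [NormedSpace ℝ E]
    [NormedAddCommGroup F] [NormedSpace ℝ F] [NormedAddCommGroup G] [NormedSpace ℝ G]
    (B : E →L[ℝ] F →L[ℝ] G) {h : D → E} (hh : ContDiff ℝ (⊤ : ℕ∞) h) {f : D → F}
    (hf : IsFlat x₀ f) : IsFlat x₀ (fun x => B (h x) (f x)) := by
  constructor
  · exact B.isBoundedBilinearMap.contDiff.comp (ContDiff.prodMk hh hf.1)
  · intro k N
    choose M hM using fun i : ℕ =>
      (isCompact_closedBall x₀ 1).exists_bound_of_continuousOn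
        ((hh.continuous_iteratedFDeriv (m := i) (by exact_mod_cast le_top)).continuousOn)
    choose C hC using fun j : ℕ => hf.2 j N
    refine ⟨‖B‖ * ∑ i ∈ Finset.range (k + 1), (k.choose i : ℝ) * M i * C (k - i),
      fun x hx => ?_⟩
    have key := B.norm_iteratedFDeriv_le_of_bilinear hh hf.1 x
      (n := k) (by exact_mod_cast le_top)
    refine key.trans ?_
    have hsum : ∑ i ∈ Finset.range (k + 1),
        (k.choose i : ℝ) * ‖iteratedFDeriv ℝ i h x‖ * ‖iteratedFDeriv ℝ (k - i) f x‖ ≤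
        ∑ i ∈ Finset.range (k + 1),
        (k.choose i : ℝ) * M i * C (k - i) * ‖x - x₀‖ ^ N := by
      apply Finset.sum_le_sum
      intro i _
      have hMpos : 0 ≤ M i :=
        le_trans (norm_nonneg _) (hM i x₀ (mem_closedBall_self zero_le_one))
      have t1 : ‖iteratedFDeriv ℝ i h x‖ ≤ M i := hM i x hx
      have t2 : ‖iteratedFDeriv ℝ (k - i) f x‖ ≤ C (k - i) * ‖x - x₀‖ ^ N := hC (k - i) x hx
      calc (k.choose i : ℝ) * ‖iteratedFDeriv ℝ i h x‖ * ‖iteratedFDeriv ℝ (k - i) f x‖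
          ≤ (k.choose i : ℝ) * M i * (C (k - i) * ‖x - x₀‖ ^ N) := by
            apply mul_le_mul _ t2 (norm_nonneg _) (by positivity)
            exact mul_le_mul_of_nonneg_left t1 (by positivity)
        _ = (k.choose i : ℝ) * M i * C (k - i) * ‖x - x₀‖ ^ N := by ring
    calc ‖B‖ * ∑ i ∈ Finset.range (k + 1),
          (k.choose i : ℝ) * ‖iteratedFDeriv ℝ i h x‖ * ‖iteratedFDeriv ℝ (k - i) f x‖
        ≤ ‖B‖ * ∑ i ∈ Finset.range (k + 1),
          (k.choose i : ℝ) * M i * C (k - i) * ‖x - x₀‖ ^ N :=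
          mul_le_mul_of_nonneg_left hsum (by positivity)
      _ = (‖B‖ * ∑ i ∈ Finset.range (k + 1),
          (k.choose i : ℝ) * M i * C (k - i)) * ‖x - x₀‖ ^ N := by
          rw [← Finset.sum_mul]; ring

theorem IsFlat.sub {E : Type} [NormedAddCommGroup E] [NormedSpace ℝ E] {f g : D → E}
    (hf : IsFlat x₀ f) (hg : IsFlat x₀ g) : IsFlat x₀ (fun x => f x - g x) := by
  refine ⟨hf.1.sub hg.1, fun k N => ?_⟩
  obtain ⟨C1, hC1⟩ := hf.2 k N
  obtain ⟨C2, hC2⟩ := hg.2 k N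
  refine ⟨C1 + C2, fun x hx => ?_⟩
  have heq : (fun x => f x - g x) = fun x => f x + (-g) x := by
    funext y; simp [sub_eq_add_neg]
  rw [heq, iteratedFDeriv_add_apply' (g := -g) (hf.1.of_le (by exact_mod_cast le_top)).contDiffAt
    ((hg.1.of_le (by exact_mod_cast le_top)).neg).contDiffAt, iteratedFDeriv_neg_apply]
  calc ‖iteratedFDeriv ℝ k f x + -iteratedFDeriv ℝ k g x‖
      ≤ ‖iteratedFDeriv ℝ k f x‖ + ‖iteratedFDeriv ℝ k g x‖ := by
        rw [← norm_neg (iteratedFDeriv ℝ k g x)] at *; exact norm_add_le _ _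
    _ ≤ C1 * ‖x - x₀‖ ^ N + C2 * ‖x - x₀‖ ^ N := add_le_add (hC1 x hx) (hC2 x hx)
    _ = (C1 + C2) * ‖x - x₀‖ ^ N := by ring


theorem contDiff_sq_norm : ContDiff ℝ (⊤ : ℕ∞) fun y : D => ‖y - x₀‖ ^ 2 :=
  (contDiff_norm_sq ℝ).comp (contDiff_id.sub contDiff_const)

theorem IsFlat.apply_eq_zero {E : Type} [NormedAddCommGroup E] [NormedSpace ℝ E] {f : D → E}
    (hf : IsFlat x₀ f) : f x₀ = 0 := by
  obtain ⟨C, hC⟩ := hf.2 0 1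
  have := hC x₀ (mem_closedBall_self zero_le_one)
  rw [norm_iteratedFDeriv_zero, sub_self, norm_zero] at this
  simp only [pow_one, mul_zero] at this
  exact norm_le_zero_iff.mp this

theorem IsFlat.quot_le {E : Type} [NormedAddCommGroup E] [NormedSpace ℝ E] (m : ℕ)
    {f : D → E} (hf : IsFlat x₀ f) :
    ∃ C : ℝ, 0 ≤ C ∧ ∀ x ∈ closedBall x₀ 1,
      ‖((‖x - x₀‖ ^ 2) ^ m)⁻¹ • f x‖ ≤ C * ‖x - x₀‖ ^ 2 := by
  obtain ⟨C, hC⟩ := hf.2 0 (2 * m + 2)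
  refine ⟨max C 0, le_max_right _ _, fun x hx => ?_⟩
  have hfb : ‖f x‖ ≤ max C 0 * ‖x - x₀‖ ^ (2 * m + 2) := by
    have h1 := hC x hx
    rw [norm_iteratedFDeriv_zero] at h1
    exact h1.trans (mul_le_mul_of_nonneg_right (le_max_left _ _) (by positivity))
  by_cases hx0 : x = x₀
  · rw [hx0, IsFlat.apply_eq_zero x₀ hf, smul_zero, norm_zero]
    positivity
  · have hr : 0 < ‖x - x₀‖ := norm_pos_iff.mpr (sub_ne_zero.mpr hx0)
    rw [norm_smul, Real.norm_eq_abs, abs_of_nonneg (by positivity)]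
    have hrm : (‖x - x₀‖ ^ 2) ^ m = ‖x - x₀‖ ^ (2 * m) := by rw [← pow_mul]
    have h2 : ‖x - x₀‖ ^ (2 * m) ≠ 0 := pow_ne_zero _ hr.ne'
    calc ((‖x - x₀‖ ^ 2) ^ m)⁻¹ * ‖f x‖
        ≤ ((‖x - x₀‖ ^ 2) ^ m)⁻¹ * (max C 0 * ‖x - x₀‖ ^ (2 * m + 2)) :=
          mul_le_mul_of_nonneg_left hfb (by positivity)
      _ = max C 0 * ‖x - x₀‖ ^ 2 := by
          rw [hrm, pow_add]
          field_simp

theorem hasFDerivAt_quot_zero {E : Type} [NormedAddCommGroup E] [NormedSpace ℝ E] (m : ℕ)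
    {f : D → E} (hf : IsFlat x₀ f) :
    HasFDerivAt (fun y => ((‖y - x₀‖ ^ 2) ^ m)⁻¹ • f y) (0 : D →L[ℝ] E) x₀ := by
  rw [hasFDerivAt_iff_isLittleO_nhds_zero]
  have hg0 : ((‖x₀ - x₀‖ ^ 2) ^ m)⁻¹ • f x₀ = (0 : E) := by
    rw [IsFlat.apply_eq_zero x₀ hf, smul_zero]
  simp only [hg0, sub_zero, ContinuousLinearMap.zero_apply]
  rw [isLittleO_iff]
  intro ε hε
  obtain ⟨C, hC0, hC⟩ := IsFlat.quot_le x₀ m hf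
  have hδ : 0 < min 1 (ε / (C + 1)) := lt_min one_pos (by positivity)
  filter_upwards [Metric.ball_mem_nhds (0 : D) hδ] with h hh
  rw [mem_ball, dist_zero_right] at hh
  have hh1 : ‖h‖ ≤ 1 := le_of_lt (lt_of_lt_of_le hh (min_le_left _ _))
  have hh2 : ‖h‖ ≤ ε / (C + 1) := le_of_lt (lt_of_lt_of_le hh (min_le_right _ _))
  have hmem : x₀ + h ∈ closedBall x₀ 1 := by
    rw [mem_closedBall, dist_eq_norm]
    simpa using hh1
  have hb := hC (x₀ + h) hmem
  have hce : C * ‖h‖ ≤ ε := by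
    calc C * ‖h‖ ≤ C * (ε / (C + 1)) := mul_le_mul_of_nonneg_left hh2 hC0
      _ ≤ ε := by
          rw [mul_comm, div_mul_eq_mul_div, div_le_iff₀ (by linarith)]
          nlinarith
  calc ‖((‖x₀ + h - x₀‖ ^ 2) ^ m)⁻¹ • f (x₀ + h)‖ ≤ C * ‖x₀ + h - x₀‖ ^ 2 := hb
    _ = C * ‖h‖ * ‖h‖ := by rw [add_sub_cancel_left]; ring
    _ ≤ ε * ‖h‖ := mul_le_mul_of_nonneg_right hce (norm_nonneg _)

theorem isFlat_quotient (k : ℕ) :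
    ∀ {E : Type} [NormedAddCommGroup E] [NormedSpace ℝ E] (m : ℕ) (f : D → E),
      IsFlat x₀ f → ContDiff ℝ (k : ℕ) fun x => ((‖x - x₀‖ ^ 2) ^ m)⁻¹ • f x := by
  induction k with
  | zero =>
    intro E _ _ m f hf
    rw [Nat.cast_zero, contDiff_zero, continuous_iff_continuousAt]
    intro x
    by_cases hx : x = x₀
    · rw [hx]
      have hval : ((‖x₀ - x₀‖ ^ 2) ^ m)⁻¹ • f x₀ = (0 : E) := by
        rw [IsFlat.apply_eq_zero x₀ hf, smul_zero]
      rw [ContinuousAt, hval]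
      obtain ⟨C, hC0, hC⟩ := IsFlat.quot_le x₀ m hf
      apply squeeze_zero_norm' (a := fun y => C * ‖y - x₀‖ ^ 2)
      · filter_upwards [closedBall_mem_nhds x₀ one_pos] with y hy
        exact hC y hy
      · have hcont : Continuous fun y : D => C * ‖y - x₀‖ ^ 2 := by fun_prop
        have := hcont.tendsto x₀
        simpa using this
    · have hux : (‖x - x₀‖ ^ 2 : ℝ) ≠ 0 :=
        ne_of_gt (pow_pos (norm_pos_iff.mpr (sub_ne_zero.mpr hx)) 2)
      exact ContinuousAt.smul
        ((((contDiff_sq_norm x₀).continuous.continuousAt).pow m).inv₀ (pow_ne_zero _ hux))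
        hf.1.continuous.continuousAt
  | succ k ih =>
    intro E _ _ m f hf
    have hu : ContDiff ℝ (⊤ : ℕ∞) fun y : D => ‖y - x₀‖ ^ 2 := contDiff_sq_norm x₀
    set u : D → ℝ := fun y => ‖y - x₀‖ ^ 2 with hu_def
    set G : D → (D →L[ℝ] E) :=
      fun x => u x • fderiv ℝ f x - ((m : ℝ) • fderiv ℝ u x).smulRight (f x) with hG_def
    have hG : IsFlat x₀ G := by
      set B₁ : ℝ →L[ℝ] (D →L[ℝ] E) →L[ℝ] (D →L[ℝ] E) := ContinuousLinearMap.lsmul ℝ ℝ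
        with hB₁
      have h1 := IsFlat.bilin x₀ (B := B₁) (h := u) hu (IsFlat.fderiv x₀ hf)
      have h2 := IsFlat.bilin x₀ (B := ContinuousLinearMap.smulRightL ℝ D E)
          (h := fun x => (m : ℝ) • fderiv ℝ u x)
          (contDiff_const.fun_smul (hu.fderiv_right (m := (⊤ : ℕ∞)) (by exact_mod_cast le_top))) hf
      have e1 : (fun x => B₁ (u x) (fderiv ℝ f x)) = fun x => u x • fderiv ℝ f x := by
        funext y
        rw [hB₁]
        exact ContinuousLinearMap.lsmul_apply ℝ ℝ _ _
      have e2 : (fun x => (ContinuousLinearMap.smulRightL ℝ D E)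
          ((m : ℝ) • fderiv ℝ u x) (f x))
          = fun x => ((m : ℝ) • fderiv ℝ u x).smulRight (f x) := rfl
      rw [e1] at h1
      rw [e2] at h2
      exact IsFlat.sub x₀ h1 h2
    have hderiv : ∀ x : D,
        HasFDerivAt (fun y => ((u y) ^ m)⁻¹ • f y) (((u x) ^ (m + 1))⁻¹ • G x) x := by
      intro x
      by_cases hx : x = x₀
      · rw [hx]
        have hzero : ((u x₀) ^ (m + 1))⁻¹ • G x₀ = 0 := by
          have hu0 : u x₀ = 0 := by simp [hu_def]
          rw [hu0, zero_pow (Nat.succ_ne_zero m), inv_zero, zero_smul]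
        rw [hzero]
        exact hasFDerivAt_quot_zero x₀ m hf
      · have hux : u x ≠ 0 :=
          ne_of_gt (pow_pos (norm_pos_iff.mpr (sub_ne_zero.mpr hx)) 2)
        have hud : HasFDerivAt u (fderiv ℝ u x) x :=
          ((hu.differentiable (by simp)).differentiableAt).hasFDerivAt
        have hfd : HasFDerivAt f (fderiv ℝ f x) x :=
          ((hf.1.differentiable (by simp)).differentiableAt).hasFDerivAt
        have hpow : HasDerivAt (fun t : ℝ => (t ^ m)⁻¹)
            (-(↑m * u x ^ (m - 1)) / (u x ^ m) ^ 2) (u x) :=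
          (hasDerivAt_pow m (u x)).inv (pow_ne_zero m hux)
        have hc : HasFDerivAt (fun y => ((u y) ^ m)⁻¹)
            ((-(↑m * u x ^ (m - 1)) / (u x ^ m) ^ 2) • fderiv ℝ u x) x :=
          hpow.comp_hasFDerivAt x hud
        have hd := hc.fun_smul hfd
        convert hd using 1
        ext v
        simp only [hG_def, ContinuousLinearMap.smul_apply, ContinuousLinearMap.sub_apply,
          ContinuousLinearMap.add_apply, ContinuousLinearMap.smulRight_apply, smul_sub,
          smul_smul]
        rw [sub_eq_add_neg, ← neg_smul]
        congr 1
        · congr 1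
          rw [pow_succ, mul_inv, mul_assoc, inv_mul_cancel₀ hux, mul_one]
        · congr 1
          cases m with
          | zero => simp
          | succ j =>
            have h2 : u x ^ (j + 1) ≠ 0 := pow_ne_zero _ hux
            have h3 : u x ^ (j + 2) ≠ 0 := pow_ne_zero _ hux
            simp only [Nat.add_sub_cancel, Nat.cast_add, Nat.cast_one]
            simp only [smul_eq_mul]
            field_simp
            ring
    rw [Nat.cast_add, Nat.cast_one, contDiff_succ_iff_fderiv]
    refine ⟨fun x => (hderiv x).differentiableAt, ?_, ?_⟩
    · intro hω
      exact absurd hω (by simp)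
    · have hfd : (fderiv ℝ fun y => ((u y) ^ m)⁻¹ • f y)
          = fun x => ((u x) ^ (m + 1))⁻¹ • G x :=
        funext fun x => (hderiv x).fderiv
      rw [hfd]
      exact ih (m + 1) G hG

end FlatFactor

/-- If `X : ℝⁿ → ℝⁿ` is a smooth compactly supported vector field all of whose iterated
derivatives vanish at a point `x₀`, then `X = q • Y` for some smooth function `q ≥ 0`
vanishing at `x₀` and some smooth compactly supported vector field `Y`. -/
theorem flat_vector_field_factorization
    {n : ℕ} (X : EuclideanSpace ℝ (Fin n) → EuclideanSpace ℝ (Fin n))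
    (x₀ : EuclideanSpace ℝ (Fin n))
    (hX : ContDiff ℝ (⊤ : ℕ∞) X) (hsupp : HasCompactSupport X)
    (hflat : ∀ k : ℕ, iteratedFDeriv ℝ k X x₀ = 0) :
    ∃ (q : EuclideanSpace ℝ (Fin n) → ℝ)
      (Y : EuclideanSpace ℝ (Fin n) → EuclideanSpace ℝ (Fin n)),
      ContDiff ℝ (⊤ : ℕ∞) q ∧ (∀ x, 0 ≤ q x) ∧ q x₀ = 0 ∧
      ContDiff ℝ (⊤ : ℕ∞) Y ∧ HasCompactSupport Y ∧ ∀ x, X x = q x • Y x := by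
  have hXflat : FlatFactor.IsFlat x₀ X :=
    ⟨hX, fun k N => FlatFactor.iFD_bound_of_flat x₀ k X hX hflat N⟩
  have hX0 : X x₀ = 0 := FlatFactor.IsFlat.apply_eq_zero x₀ hXflat
  refine ⟨fun x => ‖x - x₀‖ ^ 2, fun x => ((‖x - x₀‖ ^ 2) ^ 1)⁻¹ • X x,
    FlatFactor.contDiff_sq_norm x₀, fun x => by positivity, by simp, ?_, ?_, ?_⟩
  · exact contDiff_infty.mpr fun k => FlatFactor.isFlat_quotient x₀ k 1 X hXflat
  · exact hsupp.smul_left (f := fun x => ((‖x - x₀‖ ^ 2) ^ 1)⁻¹)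
  · intro x
    by_cases hx : x = x₀
    · subst hx
      simp [hX0]
    · have hne : (‖x - x₀‖ ^ 2 : ℝ) ≠ 0 :=
        ne_of_gt (pow_pos (norm_pos_iff.mpr (sub_ne_zero.mpr hx)) 2)
      show X x = ‖x - x₀‖ ^ 2 • ((‖x - x₀‖ ^ 2) ^ 1)⁻¹ • X x
      rw [pow_one, smul_smul, mul_inv_cancel₀ hne, one_smul]
end
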